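/- arXiv:2007.02892 — 9 statements merged into one kernel-verified Lean document; each statement's English description precedes it below -/
import Mathlib

section
/- Let q ∈ C⁰[0,1] with q > 0 on (0,1), let f ∈ C¹[0,1] with f(0)=0 and h := f′, and let c ∈ ℝ. If z ∈ C¹(0,1) satisfies ż(φ) = h(φ) − c − q(φ)/z(φ) and z(φ) < 0 for all φ ∈ (0,1), then z can be extended continuously to [0,1]; moreover the limits z(0⁺) and z(1⁻) are finite and nonpositive. -/
/-!
Let `M` bound `|h - c|` on `[0,1]`. Since `z < 0` and `q > 0`, the term `-q/z` is positive, so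
`ż ≥ -M` and `z + Mφ` is monotone on `(0,1)`; this gives one-sided limits as soon as `z` is bounded
on the relevant side. Above, `z < 0`. Below, as long as `z ≤ -1` the term `q/z` is bounded, hence so
is `ż`, and `z` cannot escape to `-∞` at `0⁺`.
-/

open Set Filter Topology

section DerivBoundedBelow

variable {z z' : ℝ → ℝ} {a b M : ℝ}

theorem monotoneOn_add_mul_of_neg_le_deriv (hz : ∀ x ∈ Ioo a b, HasDerivAt z (z' x) x)
    (hM : ∀ x ∈ Ioo a b, -M ≤ z' x) : MonotoneOn (fun x => z x + M * x) (Ioo a b) := by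
  have hg : ∀ x ∈ Ioo a b, HasDerivAt (fun x => z x + M * x) (z' x + M) x := fun x hx => by
    simpa using (hz x hx).fun_add ((hasDerivAt_id' x).const_mul M)
  refine monotoneOn_of_hasDerivWithinAt_nonneg (convex_Ioo a b) (f' := fun x => z' x + M)
    (fun x hx => (hg x hx).continuousAt.continuousWithinAt) (fun x hx => ?_) (fun x hx => ?_)
  · rw [interior_Ioo] at hx ⊢
    exact (hg x hx).hasDerivWithinAt
  · rw [interior_Ioo] at hx
    linarith [hM x hx]

theorem sub_mul_le_of_neg_le_deriv (hM0 : 0 ≤ M) (hz : ∀ x ∈ Ioo a b, HasDerivAt z (z' x) x)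
    (hM : ∀ x ∈ Ioo a b, -M ≤ z' x) {x y : ℝ} (hx : x ∈ Ioo a b) (hy : y ∈ Ioo a b)
    (hxy : x ≤ y) : z x - M * (b - a) ≤ z y := by
  have hmono := monotoneOn_add_mul_of_neg_le_deriv hz hM hx hy hxy
  have : M * (y - x) ≤ M * (b - a) := mul_le_mul_of_nonneg_left (by linarith [hx.1, hy.2]) hM0
  simp only at hmono
  linarith

theorem bddBelow_image_Ioo_of_neg_le_deriv {L K : ℝ} (hM0 : 0 ≤ M)
    (hz : ∀ x ∈ Ioo a b, HasDerivAt z (z' x) x) (hM : ∀ x ∈ Ioo a b, -M ≤ z' x)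
    (hK : ∀ x ∈ Ioo a b, z x ≤ L → z' x ≤ K) : BddBelow (z '' Ioo a b) := by
  by_cases hL : ∀ δ ∈ Ioo a b, ∃ x ∈ Ioc a δ, L < z x
  · refine ⟨L - M * (b - a), forall_mem_image.2 fun y hy => ?_⟩
    obtain ⟨x, hx, hzx⟩ := hL y hy
    linarith [sub_mul_le_of_neg_le_deriv hM0 hz hM ⟨hx.1, hx.2.trans_lt hy.2⟩ hy hx.2]
  push Not at hL
  obtain ⟨δ, hδ, hzL⟩ := hL
  refine ⟨z δ - (|K| + M) * (b - a), forall_mem_image.2 fun y hy => ?_⟩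
  have hba : 0 ≤ b - a := by linarith [hy.1, hy.2]
  rcases le_or_gt δ y with hδy | hyδ
  · linarith [sub_mul_le_of_neg_le_deriv hM0 hz hM hδ hy hδy, mul_nonneg (abs_nonneg K) hba]
  have hsub : Icc y δ ⊆ Ioo a b := Icc_subset_Ioo hy.1 hδ.2
  obtain ⟨ξ, hξ, hslope⟩ := exists_hasDerivAt_eq_slope z z' hyδ
    (fun x hx => (hz x (hsub hx)).continuousAt.continuousWithinAt)
    (fun x hx => hz x (hsub (Ioo_subset_Icc_self hx)))
  -- on `(a, δ]` we are below level `L`, where the derivative is at most `K`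
  have hξK : z' ξ ≤ |K| := (hK ξ (hsub (Ioo_subset_Icc_self hξ))
    (hzL ξ ⟨hy.1.trans hξ.1, hξ.2.le⟩)).trans (le_abs_self K)
  rw [eq_div_iff (sub_ne_zero.2 hyδ.ne')] at hslope
  have hdiff : z δ - z y ≤ |K| * (δ - y) :=
    hslope ▸ mul_le_mul_of_nonneg_right hξK (sub_nonneg.2 hyδ.le)
  have : |K| * (δ - y) ≤ |K| * (b - a) :=
    mul_le_mul_of_nonneg_left (by linarith [hy.1, hδ.2]) (abs_nonneg K)
  linarith [mul_nonneg hM0 hba]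

theorem exists_tendsto_nhdsGT_of_neg_le_deriv (hab : a < b) (hM0 : 0 ≤ M)
    (hz : ∀ x ∈ Ioo a b, HasDerivAt z (z' x) x) (hM : ∀ x ∈ Ioo a b, -M ≤ z' x)
    (hbdd : BddBelow (z '' Ioo a b)) : ∃ l, Tendsto z (𝓝[>] a) (𝓝 l) := by
  obtain ⟨B, hB⟩ := hbdd
  have hg : BddBelow ((fun x => z x + M * x) '' Ioo a b) :=
    ⟨B + M * a, forall_mem_image.2 fun x hx =>
      add_le_add (hB (mem_image_of_mem z hx)) (mul_le_mul_of_nonneg_left hx.1.le hM0)⟩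
  have hlim := (monotoneOn_add_mul_of_neg_le_deriv hz hM).tendsto_nhdsWithin_Ioo_right
    (nonempty_Ioo.2 hab) hg
  refine ⟨_, (hlim.sub ((tendsto_id.const_mul M).mono_left nhdsWithin_le_nhds)).congr
    fun x => by simp⟩

theorem exists_tendsto_nhdsLT_of_neg_le_deriv (hab : a < b) (hM0 : 0 ≤ M)
    (hz : ∀ x ∈ Ioo a b, HasDerivAt z (z' x) x) (hM : ∀ x ∈ Ioo a b, -M ≤ z' x)
    (hbdd : BddAbove (z '' Ioo a b)) : ∃ l, Tendsto z (𝓝[<] b) (𝓝 l) := by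
  obtain ⟨B, hB⟩ := hbdd
  have hg : BddAbove ((fun x => z x + M * x) '' Ioo a b) :=
    ⟨B + M * b, forall_mem_image.2 fun x hx =>
      add_le_add (hB (mem_image_of_mem z hx)) (mul_le_mul_of_nonneg_left hx.2.le hM0)⟩
  have hlim := (monotoneOn_add_mul_of_neg_le_deriv hz hM).tendsto_nhdsWithin_Ioo_left
    (nonempty_Ioo.2 hab) hg
  refine ⟨_, (hlim.sub ((tendsto_id.const_mul M).mono_left nhdsWithin_le_nhds)).congr
    fun x => by simp⟩

end DerivBoundedBelow

theorem stmt_3_general (h q z : ℝ → ℝ) (c : ℝ)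
    (hq_cont : ContinuousOn q (Icc 0 1))
    (hq_pos : ∀ φ ∈ Ioo (0:ℝ) 1, 0 < q φ)
    (hh_cont : ContinuousOn h (Icc 0 1))
    (hz_ode : ∀ φ ∈ Ioo (0:ℝ) 1, HasDerivAt z (h φ - c - q φ / z φ) φ)
    (hz_neg : ∀ φ ∈ Ioo (0:ℝ) 1, z φ < 0) :
    ∃ Z : ℝ → ℝ, ContinuousOn Z (Icc 0 1) ∧ EqOn Z z (Ioo 0 1) ∧
      Tendsto z (𝓝[>] (0:ℝ)) (𝓝 (Z 0)) ∧ Tendsto z (𝓝[<] (1:ℝ)) (𝓝 (Z 1)) ∧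
      Z 0 ≤ 0 ∧ Z 1 ≤ 0 := by
  obtain ⟨M, hM⟩ := isCompact_Icc.exists_bound_of_continuousOn
    (f := fun φ => h φ - c) (hh_cont.sub continuousOn_const)
  obtain ⟨Q, hQ⟩ := isCompact_Icc.exists_bound_of_continuousOn hq_cont
  have hM0 : 0 ≤ M := (norm_nonneg _).trans (hM 0 (left_mem_Icc.2 zero_le_one))
  have hsub : Ioo (0:ℝ) 1 ⊆ Icc 0 1 := Ioo_subset_Icc_self
  have hz'_ge : ∀ φ ∈ Ioo (0:ℝ) 1, -M ≤ h φ - c - q φ / z φ := fun φ hφ => by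
    have := (abs_le.1 (hM φ (hsub hφ))).1
    linarith [div_neg_of_pos_of_neg (hq_pos φ hφ) (hz_neg φ hφ)]
  have hz'_le : ∀ φ ∈ Ioo (0:ℝ) 1, z φ ≤ -1 → h φ - c - q φ / z φ ≤ M + Q := fun φ hφ hz1 => by
    have hqz : -(q φ / z φ) ≤ Q := by
      rw [← div_neg, div_le_iff₀ (by linarith)]
      nlinarith [(abs_le.1 (hQ φ (hsub hφ))).2, hq_pos φ hφ]
    linarith [(abs_le.1 (hM φ (hsub hφ))).2]
  obtain ⟨l₀, hl₀⟩ := exists_tendsto_nhdsGT_of_neg_le_deriv zero_lt_one hM0 hz_ode hz'_ge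
    (bddBelow_image_Ioo_of_neg_le_deriv hM0 hz_ode hz'_ge hz'_le)
  obtain ⟨l₁, hl₁⟩ := exists_tendsto_nhdsLT_of_neg_le_deriv zero_lt_one hM0 hz_ode hz'_ge
    ⟨0, forall_mem_image.2 fun φ hφ => (hz_neg φ hφ).le⟩
  have hzcont : ContinuousOn z (Ioo 0 1) := fun φ hφ =>
    (hz_ode φ hφ).continuousAt.continuousWithinAt
  have hz_nonpos : ∀ φ ∈ Ioo (0:ℝ) 1, z φ ≤ 0 := fun φ hφ => (hz_neg φ hφ).le
  rw [← eq_lim_at_left_extendFrom_Ioo zero_lt_one hl₀] at hl₀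
  rw [← eq_lim_at_right_extendFrom_Ioo zero_lt_one hl₁] at hl₁
  exact ⟨extendFrom (Ioo 0 1) z, continuousOn_Icc_extendFrom_Ioo hzcont hl₀ hl₁,
    fun φ hφ => extendFrom_extends hzcont φ hφ, hl₀, hl₁,
    le_of_tendsto hl₀ (eventually_of_mem (Ioo_mem_nhdsGT zero_lt_one) hz_nonpos),
    le_of_tendsto hl₁ (eventually_of_mem (Ioo_mem_nhdsLT zero_lt_one) hz_nonpos)⟩

/-- a negative solution of ż = h − c − q/z on (0,1) extends
continuously to [0,1], with finite nonpositive limits at 0⁺ and 1⁻. -/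
theorem stmt_3 (f h q z : ℝ → ℝ) (c : ℝ)
    (hq_cont : ContinuousOn q (Icc 0 1))
    (hq_pos : ∀ φ ∈ Ioo (0:ℝ) 1, 0 < q φ)
    (hf0 : f 0 = 0)
    (hf' : ∀ x ∈ Icc (0:ℝ) 1, HasDerivWithinAt f (h x) (Icc 0 1) x)
    (hh_cont : ContinuousOn h (Icc 0 1))
    (hz_ode : ∀ φ ∈ Ioo (0:ℝ) 1, HasDerivAt z (h φ - c - q φ / z φ) φ)
    (hz_neg : ∀ φ ∈ Ioo (0:ℝ) 1, z φ < 0) :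
    ∃ Z : ℝ → ℝ, ContinuousOn Z (Icc 0 1) ∧ EqOn Z z (Ioo 0 1) ∧
      Tendsto z (𝓝[>] (0:ℝ)) (𝓝 (Z 0)) ∧ Tendsto z (𝓝[<] (1:ℝ)) (𝓝 (Z 1)) ∧
      Z 0 ≤ 0 ∧ Z 1 ≤ 0 :=
  stmt_3_general h q z c hq_cont hq_pos hh_cont hz_ode hz_neg
end

section
/- Let q ∈ C⁰[0,1] with q > 0 on (0,1), f ∈ C¹[0,1] with f(0)=0, h := f′. Let cₙ → c in ℝ and let zₙ ∈ C⁰[0,1] ∩ C¹(0,1) satisfy żₙ(φ) = h(φ) − cₙ − q(φ)/zₙ(φ) and zₙ < 0 on (0,1). If the sequence {zₙ} is pointwise increasing and there exists v ∈ C⁰[0,1] with zₙ(φ) ≤ v(φ) < 0 for all n and all φ ∈ (0,1), then zₙ converges uniformly on [0,1] to a function z̄ ∈ C⁰[0,1] ∩ C¹(0,1) satisfying ż̄(φ) = h(φ) − c − q(φ)/z̄(φ) and z̄ < 0 on (0,1). The same conclusion holds if {zₙ} is pointwise decreasing and there exists w ∈ C⁰[0,1] with zₙ(φ) ≥ w(φ)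 for all n and all φ ∈ (0,1). -/
open Set Filter Topology MeasureTheory

noncomputable section

/-- `z` is a solution of the singular first-order ODE ż(φ) = h(φ) − c − q(φ)/z(φ)
on (0,1), negative on (0,1), and continuous on [0,1]. -/
def SolODE (h q : ℝ → ℝ) (c : ℝ) (z : ℝ → ℝ) : Prop :=
  ContinuousOn z (Icc 0 1) ∧
  (∀ φ ∈ Ioo (0:ℝ) 1, HasDerivAt z (h φ - c - q φ / z φ) φ) ∧
  (∀ φ ∈ Ioo (0:ℝ) 1, z φ < 0)

/-!
Along a solution `z` with parameter `c`, the function `z - f + c t` has derivative `-q/z ≥ 0`,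
and since `-q/z` increases with `z < 0`, the difference of these shifted functions for two
ordered solutions is monotone as well. Along a monotone sequence `zₙ`, the shifted functions
`Gₙ` therefore differ from their pointwise limit `Ḡ` by monotone functions, squeezed between
their values at `0` and `1`, which tend to `0`. So `Gₙ → Ḡ` uniformly and the limit `z̄` is
continuous; Dini's theorem makes `zₙ → z̄` uniform, and then the derivatives `h - cₙ - q/zₙ`
converge locally uniformly on `(0,1)`, which gives the equation for `z̄`.
-/

theorem le_on_Icc_of_le_on_Ioo {f g : ℝ → ℝ} {a b : ℝ} (hab : a ≠ b)
    (hf : ContinuousOn f (Icc a b)) (hg : ContinuousOn g (Icc a b))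
    (hle : ∀ x ∈ Ioo a b, f x ≤ g x) : ∀ x ∈ Icc a b, f x ≤ g x := by
  rw [← closure_Ioo hab] at hf hg ⊢
  exact le_on_closure hle hf hg

theorem tendstoUniformlyOn_Icc_of_monotoneOn_or_antitoneOn_sub {ι α : Type*} [Preorder α]
    {l : Filter ι} {G : ι → α → ℝ} {g : α → ℝ} {a b : α}
    (hmono : ∀ n, MonotoneOn (fun x => g x - G n x) (Icc a b) ∨
      AntitoneOn (fun x => g x - G n x) (Icc a b))
    (ha : Tendsto (G · a) l (𝓝 (g a))) (hb : Tendsto (G · b) l (𝓝 (g b))) :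
    TendstoUniformlyOn G g l (Icc a b) := by
  rw [Metric.tendstoUniformlyOn_iff]
  intro ε hε
  filter_upwards [Metric.tendsto_nhds.1 ha ε hε, Metric.tendsto_nhds.1 hb ε hε]
    with n han hbn x hx
  have ha' : a ∈ Icc a b := left_mem_Icc.2 (hx.1.trans hx.2)
  have hb' : b ∈ Icc a b := right_mem_Icc.2 (hx.1.trans hx.2)
  have hsandwich :
      (g a - G n a ≤ g x - G n x ∧ g x - G n x ≤ g b - G n b) ∨
      (g b - G n b ≤ g x - G n x ∧ g x - G n x ≤ g a - G n a) :=
    (hmono n).imp (fun hm => ⟨hm ha' hx hx.1, hm hx hb' hx.2⟩)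
      (fun hm => ⟨hm hx hb' hx.2, hm ha' hx hx.1⟩)
  rw [Real.dist_eq, abs_lt] at han hbn ⊢
  rcases hsandwich with ⟨h₁, h₂⟩ | ⟨h₁, h₂⟩ <;> constructor <;> linarith

namespace SolODE

def shift (f : ℝ → ℝ) (c : ℝ) (z : ℝ → ℝ) (t : ℝ) : ℝ := z t - f t + c * t

variable {f h q : ℝ → ℝ}

theorem continuousOn_shift_iff {c : ℝ} {z : ℝ → ℝ} {s : Set ℝ} (hf : ContinuousOn f s) :
    ContinuousOn (shift f c z) s ↔ ContinuousOn z s := by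
  have hlin : ContinuousOn (fun t => c * t) s := (continuous_const_mul c).continuousOn
  refine ⟨fun hG => ((hG.add hf).sub hlin).congr fun t _ => ?_, fun hz => (hz.sub hf).add hlin⟩
  show z t = z t - f t + c * t + f t - c * t
  ring

theorem hasDerivAt_shift {c : ℝ} {z : ℝ → ℝ}
    (hf' : ∀ x ∈ Icc (0:ℝ) 1, HasDerivWithinAt f (h x) (Icc 0 1) x)
    (hz : SolODE h q c z) {φ : ℝ} (hφ : φ ∈ Ioo (0:ℝ) 1) :
    HasDerivAt (shift f c z) (-(q φ / z φ)) φ := by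
  have hfφ : HasDerivAt f (h φ) φ :=
    (hf' φ (Ioo_subset_Icc_self hφ)).hasDerivAt (Icc_mem_nhds hφ.1 hφ.2)
  exact (((hz.2.1 φ hφ).sub hfφ).add ((hasDerivAt_id' φ).const_mul c)).congr_deriv (by ring)

theorem monotoneOn_shift_sub {c₁ c₂ : ℝ} {z₁ z₂ : ℝ → ℝ}
    (hq : ∀ φ ∈ Ioo (0:ℝ) 1, 0 < q φ)
    (hf' : ∀ x ∈ Icc (0:ℝ) 1, HasDerivWithinAt f (h x) (Icc 0 1) x)
    (hz₁ : SolODE h q c₁ z₁) (hz₂ : SolODE h q c₂ z₂) (hle : ∀ φ ∈ Ioo (0:ℝ) 1, z₁ φ ≤ z₂ φ) :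
    MonotoneOn (fun t => shift f c₂ z₂ t - shift f c₁ z₁ t) (Icc 0 1) := by
  have hfc : ContinuousOn f (Icc 0 1) := fun x hx => (hf' x hx).continuousWithinAt
  refine monotoneOn_of_hasDerivWithinAt_nonneg (f' := fun φ => -(q φ / z₂ φ) - -(q φ / z₁ φ))
    (convex_Icc 0 1)
    (((continuousOn_shift_iff hfc).2 hz₂.1).sub ((continuousOn_shift_iff hfc).2 hz₁.1))
    (fun φ hφ => ?_) (fun φ hφ => ?_)
  · rw [interior_Icc] at hφ
    exact ((hasDerivAt_shift hf' hz₂ hφ).sub (hasDerivAt_shift hf' hz₁ hφ)).hasDerivWithinAt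
  · rw [interior_Icc] at hφ
    have hdiv := div_le_div_of_nonneg_left (hq φ hφ).le (neg_pos.2 (hz₂.2.2 φ hφ))
      (neg_le_neg (hle φ hφ))
    rw [div_neg, div_neg] at hdiv
    linarith

theorem hasDerivAt_of_tendstoUniformlyOn {c : ℝ} {cn : ℕ → ℝ} {z : ℝ → ℝ} {zn : ℕ → ℝ → ℝ}
    (hq : ContinuousOn q (Icc 0 1)) (hcn : Tendsto cn atTop (𝓝 c))
    (hzn : ∀ n, SolODE h q (cn n) (zn n)) (hunif : TendstoUniformlyOn zn z atTop (Icc 0 1))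
    (hz : ContinuousOn z (Icc 0 1)) (hneg : ∀ φ ∈ Ioo (0:ℝ) 1, z φ < 0)
    {φ : ℝ} (hφ : φ ∈ Ioo (0:ℝ) 1) :
    HasDerivAt z (h φ - c - q φ / z φ) φ := by
  have hconst : ∀ g : ℝ → ℝ, TendstoLocallyUniformlyOn (fun (_ : ℕ) => g) g atTop (Ioo 0 1) :=
    fun g => TendstoUniformlyOn.tendstoLocallyUniformlyOn fun _ hu =>
      Eventually.of_forall fun _ _ _ => refl_mem_uniformity hu
  have hderiv : TendstoLocallyUniformlyOn (fun n φ => h φ - cn n - q φ / zn n φ)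
      (fun φ => h φ - c - q φ / z φ) atTop (Ioo 0 1) :=
    ((hconst h).fun_sub (hcn.tendstoUniformlyOn_const _).tendstoLocallyUniformlyOn).fun_sub
      ((hconst q).fun_div₀ (hunif.mono Ioo_subset_Icc_self).tendstoLocallyUniformlyOn
        (hq.mono Ioo_subset_Icc_self) (hz.mono Ioo_subset_Icc_self) fun φ hφ => (hneg φ hφ).ne)
  exact hasDerivAt_of_tendstoLocallyUniformlyOn isOpen_Ioo hderiv
    (Eventually.of_forall fun n => (hzn n).2.1)
    (fun φ hφ => hunif.tendsto_at (Ioo_subset_Icc_self hφ)) hφ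

end SolODE

open SolODE in
theorem solODE_and_tendstoUniformlyOn_of_tendsto {f h q : ℝ → ℝ} {c : ℝ} {cn : ℕ → ℝ}
    {z : ℝ → ℝ} {zn : ℕ → ℝ → ℝ}
    (hq_cont : ContinuousOn q (Icc 0 1)) (hq_pos : ∀ φ ∈ Ioo (0:ℝ) 1, 0 < q φ)
    (hf' : ∀ x ∈ Icc (0:ℝ) 1, HasDerivWithinAt f (h x) (Icc 0 1) x)
    (hcn : Tendsto cn atTop (𝓝 c)) (hzn : ∀ n, SolODE h q (cn n) (zn n))
    (hmono : (∀ φ, Monotone (zn · φ)) ∨ (∀ φ, Antitone (zn · φ)))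
    (hlim : ∀ φ ∈ Icc (0:ℝ) 1, Tendsto (zn · φ) atTop (𝓝 (z φ)))
    (hneg : ∀ φ ∈ Ioo (0:ℝ) 1, z φ < 0) :
    SolODE h q c z ∧ TendstoUniformlyOn zn z atTop (Icc 0 1) := by
  have hfc : ContinuousOn f (Icc 0 1) := fun x hx => (hf' x hx).continuousWithinAt
  have hGlim : ∀ φ ∈ Icc (0:ℝ) 1,
      Tendsto (fun n => shift f (cn n) (zn n) φ) atTop (𝓝 (shift f c z φ)) :=
    fun φ hφ => ((hlim φ hφ).sub tendsto_const_nhds).add (hcn.mul_const φ)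
  have hGdiff : ∀ n, MonotoneOn (fun t => shift f c z t - shift f (cn n) (zn n) t) (Icc 0 1) ∨
      AntitoneOn (fun t => shift f c z t - shift f (cn n) (zn n) t) (Icc 0 1) := by
    intro n
    have hdiff_lim : ∀ φ ∈ Icc (0:ℝ) 1, Tendsto (fun m => shift f (cn m) (zn m) φ -
        shift f (cn n) (zn n) φ) atTop (𝓝 (shift f c z φ - shift f (cn n) (zn n) φ)) :=
      fun φ hφ => (hGlim φ hφ).sub tendsto_const_nhds
    rcases hmono with hm | hm
    · refine .inl (monotoneOn_of_frequently_monotoneOn_of_tendsto ?_ hdiff_lim)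
      refine (eventually_ge_atTop n).frequently.mono fun m hnm => ?_
      exact monotoneOn_shift_sub hq_pos hf' (hzn n) (hzn m) fun φ _ => hm φ hnm
    · refine .inr (antitoneOn_of_frequently_antitoneOn_of_tendsto ?_ hdiff_lim)
      refine (eventually_ge_atTop n).frequently.mono fun m hnm => ?_
      simpa only [neg_sub] using
        (monotoneOn_shift_sub hq_pos hf' (hzn m) (hzn n) fun φ _ => hm φ hnm).neg
  have hGunif := tendstoUniformlyOn_Icc_of_monotoneOn_or_antitoneOn_sub hGdiff
    (hGlim 0 (left_mem_Icc.2 zero_le_one)) (hGlim 1 (right_mem_Icc.2 zero_le_one))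
  have hcont : ContinuousOn z (Icc 0 1) := (continuousOn_shift_iff hfc).1 <|
    hGunif.continuousOn <| Frequently.of_forall fun n => (continuousOn_shift_iff hfc).2 (hzn n).1
  have hunif : TendstoUniformlyOn zn z atTop (Icc 0 1) := by
    rcases hmono with hm | hm
    · exact Monotone.tendstoUniformlyOn_of_forall_tendsto isCompact_Icc (fun n => (hzn n).1)
        (fun φ _ => hm φ) hcont hlim
    · exact Antitone.tendstoUniformlyOn_of_forall_tendsto isCompact_Icc (fun n => (hzn n).1)
        (fun φ _ => hm φ) hcont hlim
  exact ⟨⟨hcont, fun φ hφ => hasDerivAt_of_tendstoUniformlyOn hq_cont hcn hzn hunif hcont hneg hφ,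
    hneg⟩, hunif⟩

theorem stmt_4_general (f h q : ℝ → ℝ) (c : ℝ) (cn : ℕ → ℝ) (zn : ℕ → ℝ → ℝ)
    (hq_cont : ContinuousOn q (Icc 0 1))
    (hq_pos : ∀ φ ∈ Ioo (0:ℝ) 1, 0 < q φ)
    (hf' : ∀ x ∈ Icc (0:ℝ) 1, HasDerivWithinAt f (h x) (Icc 0 1) x)
    (hcn : Tendsto cn atTop (𝓝 c))
    (hzn : ∀ n, SolODE h q (cn n) (zn n))
    (hmono :
      ((∀ φ, Monotone fun n => zn n φ) ∧
        ∃ v : ℝ → ℝ, ContinuousOn v (Icc 0 1) ∧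
          ∀ n, ∀ φ ∈ Ioo (0:ℝ) 1, zn n φ ≤ v φ ∧ v φ < 0) ∨
      ((∀ φ, Antitone fun n => zn n φ) ∧
        ∃ w : ℝ → ℝ, ContinuousOn w (Icc 0 1) ∧
          ∀ n, ∀ φ ∈ Ioo (0:ℝ) 1, w φ ≤ zn n φ)) :
    ∃ zbar : ℝ → ℝ, SolODE h q c zbar ∧
      TendstoUniformlyOn zn zbar atTop (Icc 0 1) := by
  rcases hmono with ⟨hm, v, -, hv⟩ | ⟨hm, w, hw, hwz⟩
  · have hbdd : ∀ φ ∈ Icc (0:ℝ) 1, BddAbove (range (zn · φ)) := fun φ hφ =>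
      ⟨0, forall_mem_range.2 fun n => le_on_Icc_of_le_on_Ioo zero_ne_one (hzn n).1
        continuousOn_const (fun ψ hψ => ((hzn n).2.2 ψ hψ).le) φ hφ⟩
    refine ⟨fun φ => ⨆ n, zn n φ, solODE_and_tendstoUniformlyOn_of_tendsto hq_cont hq_pos hf'
      hcn hzn (.inl hm) (fun φ hφ => tendsto_atTop_ciSup (hm φ) (hbdd φ hφ)) fun φ hφ => ?_⟩
    exact (ciSup_le fun n => (hv n φ hφ).1).trans_lt (hv 0 φ hφ).2
  · have hbdd : ∀ φ ∈ Icc (0:ℝ) 1, BddBelow (range (zn · φ)) := fun φ hφ =>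
      ⟨w φ, forall_mem_range.2 fun n => le_on_Icc_of_le_on_Ioo zero_ne_one hw (hzn n).1
        (hwz n) φ hφ⟩
    refine ⟨fun φ => ⨅ n, zn n φ, solODE_and_tendstoUniformlyOn_of_tendsto hq_cont hq_pos hf'
      hcn hzn (.inr hm) (fun φ hφ => tendsto_atTop_ciInf (hm φ) (hbdd φ hφ)) fun φ hφ => ?_⟩
    exact (ciInf_le (hbdd φ (Ioo_subset_Icc_self hφ)) 0).trans_lt ((hzn 0).2.2 φ hφ)

/-- monotone sequences of solutions with the stated bounds converge
uniformly on [0,1] to a solution with parameter c. -/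
theorem stmt_4 (f h q : ℝ → ℝ) (c : ℝ) (cn : ℕ → ℝ) (zn : ℕ → ℝ → ℝ)
    (hq_cont : ContinuousOn q (Icc 0 1))
    (hq_pos : ∀ φ ∈ Ioo (0:ℝ) 1, 0 < q φ)
    (hf0 : f 0 = 0)
    (hf' : ∀ x ∈ Icc (0:ℝ) 1, HasDerivWithinAt f (h x) (Icc 0 1) x)
    (hh_cont : ContinuousOn h (Icc 0 1))
    (hcn : Tendsto cn atTop (𝓝 c))
    (hzn : ∀ n, SolODE h q (cn n) (zn n))
    (hmono :
      ((∀ φ, Monotone fun n => zn n φ) ∧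
        ∃ v : ℝ → ℝ, ContinuousOn v (Icc 0 1) ∧
          ∀ n, ∀ φ ∈ Ioo (0:ℝ) 1, zn n φ ≤ v φ ∧ v φ < 0) ∨
      ((∀ φ, Antitone fun n => zn n φ) ∧
        ∃ w : ℝ → ℝ, ContinuousOn w (Icc 0 1) ∧
          ∀ n, ∀ φ ∈ Ioo (0:ℝ) 1, w φ ≤ zn n φ)) :
    ∃ zbar : ℝ → ℝ, SolODE h q c zbar ∧
      TendstoUniformlyOn zn zbar atTop (Icc 0 1) :=
  stmt_4_general f h q c cn zn hq_cont hq_pos hf' hcn hzn hmono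
end
end

section
/- Assume (q) and let f ∈ C¹[0,1] with f(0)=0, h := f′. Let c* be the threshold such that problem (P_c⁰⁰) admits a (unique) solution if and only if c ≥ c*. Then c* ≥ max{ sup_{φ∈(0,1]} f(φ)/φ , h(0) + 2·√( liminf_{φ→0⁺} q(φ)/φ ) }. -/
open Set Filter Topology MeasureTheory

noncomputable section

/-- Problem (P_c): the singular ODE with the left boundary condition z(0) = 0. -/
def PC (h q : ℝ → ℝ) (c : ℝ) (z : ℝ → ℝ) : Prop :=
  SolODE h q c z ∧ z 0 = 0

/-- Problem (P_c⁰⁰): the singular ODE with the two boundary conditions z(0) = z(1) = 0. -/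
def PC00 (h q : ℝ → ℝ) (c : ℝ) (z : ℝ → ℝ) : Prop :=
  PC h q c z ∧ z 1 = 0

/-!
Take a solution `z` of `(P_{c*}⁰⁰)`. Along it, `z - f + c*·φ` has derivative `-q/z > 0`, so
`f - c*·φ ≤ z ≤ 0`; dividing by `φ` gives `f(φ)/φ ≤ c*`, and `h(0) = lim f(φ)/φ` keeps `z/φ`
bounded below near `0`. On the other hand, `u = z/φ` satisfies
`φ·u' = h - c* + q/(-z) + (-z)/φ ≥ h - c* + 2·√(q/φ)` by AM-GM. If `c*` were smaller than
`h(0) + 2·√(liminf q/φ)`, then `φ·u' ≥ κ > 0` near `0`, so `u ≤ const + κ·log φ → -∞`.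
-/

lemma two_sqrt_div_le_div_add_div {a b w : ℝ} (ha : 0 ≤ a) (hb : 0 < b) (hw : 0 < w) :
    2 * √(a / b) ≤ a / w + w / b := by
  set s := √(a / b)
  have hs : s ^ 2 * b = a := by
    rw [Real.sq_sqrt (div_nonneg ha hb.le), div_mul_cancel₀ _ hb.ne']
  rw [div_add_div _ _ hw.ne' hb.ne', le_div_iff₀ (mul_pos hw hb)]
  nlinarith [sq_nonneg (s * b - w)]

lemma eventually_lt_add_two_sqrt_of_lt {α : Type*} {l : Filter α} {g r : α → ℝ} {a y : ℝ}
    (hg : Tendsto g l (𝓝 a)) (hr : ∀ᶠ x in l, 0 ≤ r x) (hy : y < a + 2 * √(liminf r l)) :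
    ∀ᶠ x in l, y < g x + 2 * √(r x) := by
  obtain ⟨t, hyt, htl⟩ := exists_between (show (y - a) / 2 < √(liminf r l) by linarith)
  have hg_ev : ∀ᶠ x in l, y - 2 * t < g x := hg.eventually (lt_mem_nhds (by linarith))
  have hr_ev : ∀ᶠ x in l, t ≤ √(r x) := by
    rcases le_or_gt t 0 with ht | ht
    · exact Eventually.of_forall fun x => ht.trans (Real.sqrt_nonneg _)
    · have ht2 : t ^ 2 < liminf r l := (Real.lt_sqrt ht.le).1 htl
      filter_upwards [eventually_lt_of_lt_liminf ht2 (isBoundedUnder_of_eventually_ge hr)]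
        with x hx
      exact ((Real.lt_sqrt ht.le).2 hx).le
  filter_upwards [hg_ev, hr_ev] with x hgx hrx
  linarith

lemma tendsto_div_self_of_hasDerivWithinAt {f : ℝ → ℝ} {a : ℝ} (hf0 : f 0 = 0)
    (hf : HasDerivWithinAt f a (Ioi 0) 0) :
    Tendsto (fun x => f x / x) (𝓝[>] 0) (𝓝 a) := by
  refine ((hasDerivWithinAt_iff_tendsto_slope' (lt_irrefl 0)).1 hf).congr fun x => ?_
  simp [slope_def_field, hf0]

lemma tendsto_atBot_of_le_mul_deriv {u u' : ℝ → ℝ} {κ : ℝ} (hκ : 0 < κ)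
    (hu : ∀ᶠ x in 𝓝[>] 0, HasDerivAt u (u' x) x ∧ κ ≤ x * u' x) :
    Tendsto u (𝓝[>] 0) atBot := by
  obtain ⟨δ, hδ, hsub⟩ := mem_nhdsGT_iff_exists_Ioo_subset.1 hu
  set g := fun x => u x - κ * Real.log x
  have hg_deriv : ∀ x ∈ Ioo 0 δ, HasDerivAt g (u' x - κ * x⁻¹) x := fun x hx =>
    (hsub hx).1.sub ((Real.hasDerivAt_log hx.1.ne').const_mul κ)
  have hg_mono : MonotoneOn g (Ioo 0 δ) := by
    refine monotoneOn_of_hasDerivWithinAt_nonneg (f' := fun x => u' x - κ * x⁻¹)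
      (convex_Ioo 0 δ) (fun x hx => (hg_deriv x hx).continuousAt.continuousWithinAt)
      (fun x hx => ?_) (fun x hx => ?_) <;> rw [interior_Ioo] at hx
    · exact (hg_deriv x hx).hasDerivWithinAt
    · rw [sub_nonneg, ← div_eq_mul_inv, div_le_iff₀ hx.1, mul_comm]
      exact (hsub hx).2
  have hδ2 : δ / 2 ∈ Ioo 0 δ := ⟨half_pos hδ, half_lt_self hδ⟩
  have hlog : Tendsto (fun x => g (δ / 2) + κ * Real.log x) (𝓝[>] 0) atBot :=
    tendsto_atBot_add_const_left _ _ (Real.tendsto_log_nhdsGT_zero.const_mul_atBot hκ)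
  refine tendsto_atBot_mono' _ ?_ hlog
  filter_upwards [Ioo_mem_nhdsGT hδ2.1] with x hx
  have := hg_mono ⟨hx.1, hx.2.trans hδ2.2⟩ hδ2 hx.2.le
  simp only [g] at this
  linarith

namespace SolODE

variable {h q : ℝ → ℝ} {c : ℝ} {z : ℝ → ℝ}

lemma hasDerivAt_div_self (hz : SolODE h q c z) {x : ℝ} (hx : x ∈ Ioo (0:ℝ) 1) :
    HasDerivAt (fun φ => z φ / φ) ((h x - c - q x / z x - z x / x) / x) x := by
  have hx0 : x ≠ 0 := hx.1.ne'
  refine ((hz.2.1 x hx).div (hasDerivAt_id' x) hx0).congr_deriv ?_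
  field_simp

lemma two_sqrt_le_neg_div_sub_div (hz : SolODE h q c z) (hq : ∀ φ ∈ Ioo (0:ℝ) 1, 0 < q φ)
    {x : ℝ} (hx : x ∈ Ioo (0:ℝ) 1) :
    2 * √(q x / x) ≤ -(q x / z x) - z x / x := by
  have hamgm := two_sqrt_div_le_div_add_div (hq x hx).le hx.1 (neg_pos.2 (hz.2.2 x hx))
  rw [div_neg, neg_div] at hamgm
  linarith

lemma tendsto_div_self_atBot (hz : SolODE h q c z) (hq : ∀ φ ∈ Ioo (0:ℝ) 1, 0 < q φ)
    (hh : Tendsto h (𝓝[>] 0) (𝓝 (h 0)))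
    (hc : c < h 0 + 2 * √(liminf (fun φ => q φ / φ) (𝓝[>] 0))) :
    Tendsto (fun φ => z φ / φ) (𝓝[>] 0) atBot := by
  obtain ⟨κ, hκ, hκc⟩ : ∃ κ, 0 < κ ∧ c + κ < h 0 + 2 * √(liminf (fun φ => q φ / φ) (𝓝[>] 0)) :=
    ⟨_, half_pos (sub_pos.2 hc), by linarith⟩
  have hIoo : Ioo (0:ℝ) 1 ∈ 𝓝[>] (0:ℝ) := Ioo_mem_nhdsGT zero_lt_one
  have hr : ∀ᶠ φ in 𝓝[>] (0:ℝ), 0 ≤ q φ / φ := by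
    filter_upwards [hIoo] with φ hφ using (div_pos (hq φ hφ) hφ.1).le
  have hev := eventually_lt_add_two_sqrt_of_lt hh hr hκc
  refine tendsto_atBot_of_le_mul_deriv (u' := fun x => (h x - c - q x / z x - z x / x) / x)
    hκ ?_
  filter_upwards [hIoo, hev] with x hx hlt
  refine ⟨hz.hasDerivAt_div_self hx, ?_⟩
  rw [mul_div_cancel₀ _ hx.1.ne']
  linarith [hz.two_sqrt_le_neg_div_sub_div hq hx]

end SolODE

namespace PC

variable {f h q : ℝ → ℝ} {c : ℝ} {z : ℝ → ℝ}

lemma sub_mul_le (hz : PC h q c z) (hq : ∀ φ ∈ Ioo (0:ℝ) 1, 0 < q φ) (hf0 : f 0 = 0)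
    (hf : ∀ x ∈ Icc (0:ℝ) 1, HasDerivWithinAt f (h x) (Icc 0 1) x)
    {φ : ℝ} (hφ : φ ∈ Icc (0:ℝ) 1) :
    f φ - c * φ ≤ z φ := by
  obtain ⟨⟨hz_cont, hz_ode, hz_neg⟩, hz0⟩ := hz
  have hmono : MonotoneOn (fun φ => z φ - f φ + c * φ) (Icc 0 1) := by
    refine monotoneOn_of_hasDerivWithinAt_nonneg (f' := fun x => -(q x / z x))
      (convex_Icc 0 1) ?_ (fun x hx => ?_) (fun x hx => ?_)
    · exact (hz_cont.sub fun x hx => (hf x hx).continuousWithinAt).add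
        (continuousOn_const.mul continuousOn_id)
    · rw [interior_Icc] at hx
      have hfx := (hf x (Ioo_subset_Icc_self hx)).hasDerivAt (Icc_mem_nhds hx.1 hx.2)
      exact ((((hz_ode x hx).sub hfx).add ((hasDerivAt_id' x).const_mul c)).congr_deriv
        (by ring)).hasDerivWithinAt
    · rw [interior_Icc] at hx
      exact neg_nonneg.2 (div_nonpos_of_nonneg_of_nonpos (hq x hx).le (hz_neg x hx).le)
  have := hmono ⟨le_rfl, zero_le_one⟩ hφ hφ.1
  simp only [hz0, hf0] at this
  linarith

lemma not_tendsto_div_self_atBot (hz : PC h q c z) (hq : ∀ φ ∈ Ioo (0:ℝ) 1, 0 < q φ)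
    (hf0 : f 0 = 0) (hf : ∀ x ∈ Icc (0:ℝ) 1, HasDerivWithinAt f (h x) (Icc 0 1) x) :
    ¬ Tendsto (fun φ => z φ / φ) (𝓝[>] 0) atBot := by
  intro hbot
  have hslope := tendsto_div_self_of_hasDerivWithinAt hf0
    ((hf 0 ⟨le_rfl, zero_le_one⟩).mono_of_mem_nhdsWithin (Icc_mem_nhdsGT zero_lt_one))
  have hev : ∀ᶠ φ in 𝓝[>] (0:ℝ),
      φ ∈ Ioo (0:ℝ) 1 ∧ z φ / φ < h 0 - c - 1 ∧ h 0 - 1 < f φ / φ := by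
    filter_upwards [Ioo_mem_nhdsGT zero_lt_one, hbot.eventually (eventually_lt_atBot _),
      hslope.eventually (lt_mem_nhds (sub_one_lt (h 0)))] with φ hφ hzφ hfφ
    exact ⟨hφ, hzφ, hfφ⟩
  obtain ⟨φ, hφ, hzφ, hfφ⟩ := hev.exists
  have hdiv := div_le_div_of_nonneg_right (hz.sub_mul_le hq hf0 hf (Ioo_subset_Icc_self hφ))
    hφ.1.le
  rw [sub_div, mul_div_cancel_right₀ _ hφ.1.ne'] at hdiv
  linarith

end PC

lemma PC00.div_self_le {f h q : ℝ → ℝ} {c : ℝ} {z : ℝ → ℝ} (hz : PC00 h q c z)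
    (hq : ∀ φ ∈ Ioo (0:ℝ) 1, 0 < q φ) (hf0 : f 0 = 0)
    (hf : ∀ x ∈ Icc (0:ℝ) 1, HasDerivWithinAt f (h x) (Icc 0 1) x)
    {φ : ℝ} (hφ : φ ∈ Ioc (0:ℝ) 1) :
    f φ / φ ≤ c := by
  have hz_nonpos : z φ ≤ 0 := by
    rcases hφ.2.eq_or_lt with rfl | h1
    · exact hz.2.le
    · exact (hz.1.1.2.2 φ ⟨hφ.1, h1⟩).le
  have := hz.1.sub_mul_le hq hf0 hf (Ioc_subset_Icc_self hφ)
  rw [div_le_iff₀ hφ.1]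
  linarith

theorem stmt_7_general (f h q : ℝ → ℝ) (cstar : ℝ)
    (hq_pos : ∀ φ ∈ Ioo (0:ℝ) 1, 0 < q φ)
    (hf0 : f 0 = 0)
    (hf' : ∀ x ∈ Icc (0:ℝ) 1, HasDerivWithinAt f (h x) (Icc 0 1) x)
    (hh_cont : ContinuousOn h (Icc 0 1))
    (hcstar : ∀ c : ℝ, (∃ z : ℝ → ℝ, PC00 h q c z) ↔ cstar ≤ c) :
    max (sSup ((fun φ => f φ / φ) '' Ioc (0:ℝ) 1))
        (h 0 + 2 * Real.sqrt (Filter.liminf (fun φ => q φ / φ) (𝓝[>] (0:ℝ)))) ≤ cstar := by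
  obtain ⟨z, hz⟩ := (hcstar cstar).mpr le_rfl
  refine max_le (csSup_le ((nonempty_Ioc.2 zero_lt_one).image _) ?_) ?_
  · rintro _ ⟨φ, hφ, rfl⟩
    exact hz.div_self_le hq_pos hf0 hf' hφ
  · by_contra! hlt
    have hh : Tendsto h (𝓝[>] 0) (𝓝 (h 0)) :=
      ((hh_cont 0 ⟨le_rfl, zero_le_one⟩).mono_of_mem_nhdsWithin
        (Icc_mem_nhdsGT zero_lt_one)).tendsto
    exact hz.1.not_tendsto_div_self_atBot hq_pos hf0 hf'
      (hz.1.1.tendsto_div_self_atBot hq_pos hh hlt)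

/-- lower bound for the critical threshold c* of problem (P_c⁰⁰). -/
theorem stmt_7 (f h q : ℝ → ℝ) (cstar : ℝ)
    (hq_cont : ContinuousOn q (Icc 0 1))
    (hq_pos : ∀ φ ∈ Ioo (0:ℝ) 1, 0 < q φ)
    (hq0 : q 0 = 0) (hq1 : q 1 = 0)
    (hq_lim : ∃ L : ℝ, ∀ᶠ φ in 𝓝[>] (0:ℝ), q φ / φ ≤ L)
    (hf0 : f 0 = 0)
    (hf' : ∀ x ∈ Icc (0:ℝ) 1, HasDerivWithinAt f (h x) (Icc 0 1) x)
    (hh_cont : ContinuousOn h (Icc 0 1))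
    (hcstar : ∀ c : ℝ, (∃ z : ℝ → ℝ, PC00 h q c z) ↔ cstar ≤ c) :
    max (sSup ((fun φ => f φ / φ) '' Ioc (0:ℝ) 1))
        (h 0 + 2 * Real.sqrt (Filter.liminf (fun φ => q φ / φ) (𝓝[>] (0:ℝ)))) ≤ cstar :=
  stmt_7_general f h q cstar hq_pos hf0 hf' hh_cont hcstar
end
end

section
/- Assume (q), let f ∈ C¹[0,1] with f(0)=0, h := f′, and let c* be the threshold for problem (P_c⁰⁰). Let c₂ > c₁ ≥ c*, and let z₁ and z₂ be solutions of (P_{c₁}) and (P_{c₂}) respectively. If z₁(1) ≤ z₂(1), then z₁(φ) < z₂(φ) for all φ ∈ (0,1). -/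
open Set Filter Topology MeasureTheory

noncomputable section

/-- monotonicity of solutions of (P_c) with respect to c. -/
theorem stmt_9 (f h q : ℝ → ℝ) (cstar c₁ c₂ : ℝ) (z₁ z₂ : ℝ → ℝ)
    (hq_cont : ContinuousOn q (Icc 0 1))
    (hq_pos : ∀ φ ∈ Ioo (0:ℝ) 1, 0 < q φ)
    (hq0 : q 0 = 0) (hq1 : q 1 = 0)
    (hq_lim : ∃ L : ℝ, ∀ᶠ φ in 𝓝[>] (0:ℝ), q φ / φ ≤ L)
    (hf0 : f 0 = 0)
    (hf' : ∀ x ∈ Icc (0:ℝ) 1, HasDerivWithinAt f (h x) (Icc 0 1) x)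
    (hh_cont : ContinuousOn h (Icc 0 1))
    (hcstar : ∀ c' : ℝ, (∃ z : ℝ → ℝ, PC00 h q c' z) ↔ cstar ≤ c')
    (hc₁ : cstar ≤ c₁) (hc₁₂ : c₁ < c₂)
    (hz₁ : PC h q c₁ z₁) (hz₂ : PC h q c₂ z₂)
    (h11 : z₁ 1 ≤ z₂ 1) :
    ∀ φ ∈ Ioo (0:ℝ) 1, z₁ φ < z₂ φ := by
  intro φ₀ hφ₀
  by_contra hcon
  push_neg at hcon
  set w : ℝ → ℝ := fun s => z₂ s - z₁ s with hw
  have hw0 : w φ₀ ≤ 0 := sub_nonpos.mpr hcon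
  have hwcont : ContinuousOn w (Icc 0 1) := hz₂.1.1.sub hz₁.1.1
  have hderiv : ∀ s ∈ Ioo (0:ℝ) 1,
      HasDerivAt w ((h s - c₂ - q s / z₂ s) - (h s - c₁ - q s / z₁ s)) s :=
    fun s hs => (hz₂.1.2.1 s hs).sub (hz₁.1.2.1 s hs)
  have hdlt : ∀ s ∈ Ioo (0:ℝ) 1, w s ≤ 0 →
      ((h s - c₂ - q s / z₂ s) - (h s - c₁ - q s / z₁ s)) < 0 := by
    intro s hs hws
    have hz1 := hz₁.1.2.2 s hs
    have hz2 := hz₂.1.2.2 s hs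
    have hq := hq_pos s hs
    have key : q s / z₁ s - q s / z₂ s ≤ 0 := by
      have heq : q s / z₁ s - q s / z₂ s = q s * (z₂ s - z₁ s) / (z₁ s * z₂ s) := by
        rw [div_sub_div _ _ hz1.ne hz2.ne]
        ring_nf
      rw [heq]
      apply div_nonpos_of_nonpos_of_nonneg
      · exact mul_nonpos_of_nonneg_of_nonpos hq.le hws
      · exact (mul_pos_of_neg_of_neg hz1 hz2).le
    have heq2 : (h s - c₂ - q s / z₂ s) - (h s - c₁ - q s / z₁ s)
        = (c₁ - c₂) + (q s / z₁ s - q s / z₂ s) := by ring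
    rw [heq2]; linarith
  set S : Set ℝ := {t | t ∈ Icc φ₀ (1:ℝ) ∧ ∀ s ∈ Icc φ₀ t, w s ≤ 0} with hS
  have hφ₀S : φ₀ ∈ S := by
    refine ⟨⟨le_rfl, hφ₀.2.le⟩, ?_⟩
    intro s hs
    have : s = φ₀ := le_antisymm hs.2 hs.1
    rwa [this]
  have hSbdd : BddAbove S := ⟨1, fun t ht => ht.1.2⟩
  have hSne : S.Nonempty := ⟨φ₀, hφ₀S⟩
  set T := sSup S with hT
  have hφ₀T : φ₀ ≤ T := le_csSup hSbdd hφ₀S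
  have hT1 : T ≤ 1 := csSup_le hSne fun t ht => ht.1.2
  have hwIco : ∀ s ∈ Ico φ₀ T, w s ≤ 0 := by
    intro s hs
    obtain ⟨t, htS, hst⟩ := exists_lt_of_lt_csSup hSne hs.2
    exact htS.2 s ⟨hs.1, hst.le⟩
  have hwT : w T ≤ 0 := by
    rcases eq_or_lt_of_le hφ₀T with heq | hlt
    · rw [← heq]; exact hw0
    · have hTmem : T ∈ Icc (0:ℝ) 1 := ⟨le_trans hφ₀.1.le hφ₀T, hT1⟩
      have hc : ContinuousWithinAt w (Ico φ₀ T) T :=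
        (hwcont.continuousWithinAt hTmem).mono
          (fun s hs => ⟨le_trans hφ₀.1.le hs.1, le_trans hs.2.le hT1⟩)
      have hne : (𝓝[Ico φ₀ T] T).NeBot := by
        rw [← mem_closure_iff_nhdsWithin_neBot, closure_Ico (ne_of_lt hlt)]
        exact ⟨hφ₀T, le_rfl⟩
      exact le_of_tendsto hc (eventually_mem_nhdsWithin.mono fun s hs => hwIco s hs)
  have hTIoo : T ∈ Ioo (0:ℝ) 1 → False := by
    intro hTm
    have hd := hderiv T hTm
    have hdneg := hdlt T hTm hwT
    have hslope : Tendsto (slope w T) (𝓝[>] T)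
        (𝓝 ((h T - c₂ - q T / z₂ T) - (h T - c₁ - q T / z₁ T))) :=
      (hasDerivAt_iff_tendsto_slope.mp hd).mono_left
        (nhdsWithin_mono T fun s hs => ne_of_gt hs)
    have hev : ∀ᶠ s in 𝓝[>] T, w s ≤ 0 := by
      filter_upwards [hslope.eventually_lt_const hdneg, eventually_mem_nhdsWithin]
        with s hs1 hs2
      rw [slope_def_field] at hs1
      have hsT : (0:ℝ) < s - T := by
        have : T < s := hs2
        linarith
      have : w s - w T < 0 := by
        by_contra hge
        push_neg at hge
        have := div_nonneg hge hsT.le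
        linarith
      linarith
    obtain ⟨u, hu, hsub⟩ := mem_nhdsGT_iff_exists_Ioc_subset.mp hev
    set t := min u ((T + 1) / 2) with ht
    have hTt : T < t := lt_min hu (by linarith [hTm.2])
    have ht1 : t ≤ 1 := le_trans (min_le_right _ _) (by linarith [hTm.2])
    have htS : t ∈ S := by
      refine ⟨⟨le_trans hφ₀T hTt.le, ht1⟩, ?_⟩
      intro s hs
      rcases le_or_gt s T with hsT | hsT
      · rcases eq_or_lt_of_le hsT with heq | hlt
        · rw [heq]; exact hwT
        · exact hwIco s ⟨hs.1, hlt⟩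
      · exact hsub ⟨hsT, le_trans hs.2 (min_le_left _ _)⟩
    exact absurd (le_csSup hSbdd htS) (not_le.mpr hTt)
  have hTeq : T = 1 := by
    rcases eq_or_lt_of_le hT1 with h | h
    · exact h
    · exact absurd (hTIoo ⟨lt_of_lt_of_le hφ₀.1 hφ₀T, h⟩) not_false
  have hφ₀1 : φ₀ < 1 := hφ₀.2
  have hanti : StrictAntiOn w (Icc φ₀ 1) := by
    apply strictAntiOn_of_deriv_neg (convex_Icc φ₀ 1)
      (hwcont.mono (Icc_subset_Icc hφ₀.1.le le_rfl))
    intro s hs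
    rw [interior_Icc] at hs
    have hsIoo : s ∈ Ioo (0:ℝ) 1 := ⟨lt_trans hφ₀.1 hs.1, hs.2⟩
    have hws : w s ≤ 0 := hwIco s ⟨hs.1.le, by rw [hTeq]; exact hs.2⟩
    rw [(hderiv s hsIoo).deriv]
    exact hdlt s hsIoo hws
  have h1 : w 1 < w φ₀ :=
    hanti ⟨le_rfl, hφ₀1.le⟩ ⟨hφ₀1.le, le_rfl⟩ hφ₀1
  have : (0:ℝ) ≤ w 1 := sub_nonneg.mpr h11
  linarith
end
end

section
/- Assume (q), let f ∈ C¹[0,1] with f(0)=0, h := f′, let c* be the threshold for problem (P_c⁰⁰), and for c > c* let β(c) < 0 be the minimal value b such that (P_c) with z(1) = b is solvable. Then: (i) β(c₂) < β(c₁) for all c₂ > c₁ > c*; (ii) β(c) → −∞ as c → +∞. -/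
/-!
Let `z₁` solve `(P_{c₁})` with `z₁(1) = β(c₁)`. For `c₂ > c₁` the function `z₁(φ) - (c₂ - c₁) φ`
has slope above the vector field of the `c₂`-equation, and any solution for a larger `c` has slope
below it. Integrating the `c₂`-equation backwards from `φ = 1` with an endpoint value `b` between
the two, the solution stays trapped between these barriers all the way down to `φ = 0`, where both
vanish, so it solves `(P_{c₂})`. Hence `β(c₂) ≤ β(c₁) - (c₂ - c₁)`, which gives both claims.
-/

open Set Filter Topology MeasureTheory

noncomputable section

open scoped NNReal

theorem exists_hasDerivWithinAt_Icc_of_lipschitzWith {E : Type*} [NormedAddCommGroup E]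
    [NormedSpace ℝ E] [CompleteSpace E] {G : ℝ → E → E} {a b : ℝ} {K C : ℝ≥0}
    (hab : a ≤ b) (x₀ : E) (hG : ∀ t ∈ Icc a b, LipschitzWith K (G t))
    (hGt : ∀ x, ContinuousOn (G · x) (Icc a b)) (hGC : ∀ t ∈ Icc a b, ∀ x, ‖G t x‖ ≤ C) :
    ∃ α : ℝ → E, α b = x₀ ∧
      ∀ t ∈ Icc a b, HasDerivWithinAt α (G t (α t)) (Icc a b) t := by
  have hpl : IsPicardLindelof G (⟨b, right_mem_Icc.2 hab⟩ : Icc a b) x₀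
      (C * (b - a).toNNReal) 0 C K :=
    { lipschitzOnWith := fun t ht => (hG t ht).lipschitzOnWith
      continuousOn := fun x _ => hGt x
      norm_le := fun t ht x _ => hGC t ht x
      mul_max_le := by simp [hab] }
  exact hpl.exists_eq_forall_mem_Icc_hasDerivWithinAt₀

theorem lt_on_Icc_of_hasDerivWithinAt_Ici {f g : ℝ → ℝ} {a b : ℝ}
    (hf : ContinuousOn f (Icc a b)) (hg : ContinuousOn g (Icc a b)) (hb : f b < g b)
    (hfg : ∀ t ∈ Ico a b, f t = g t → ∃ f' g', HasDerivWithinAt f f' (Ici t) t ∧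
      HasDerivWithinAt g g' (Ici t) t ∧ g' < f') :
    ∀ t ∈ Icc a b, f t < g t := by
  -- At the last point `s` with `g s ≤ f s` we get `f s = g s`, and `f' > g'` then pushes `f`
  -- above `g` just to the right of `s`.
  by_contra! hbad
  set T := {t ∈ Icc a b | g t ≤ f t}
  have hT : IsClosed T := isClosed_Icc.isClosed_le hg hf
  have hTbdd : BddAbove T := ⟨b, fun t ht => ht.1.2⟩
  have hsT : sSup T ∈ T := hT.csSup_mem hbad hTbdd
  set s := sSup T
  have hsb : s < b := lt_of_le_of_ne hsT.1.2 fun hsb => (hsb ▸ hsT.2).not_gt hb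
  have above (u : ℝ) (hu : u ∈ Ioc s b) : f u < g u := by
    by_contra! hu'
    exact (le_csSup hTbdd ⟨⟨hsT.1.1.trans hu.1.le, hu.2⟩, hu'⟩).not_gt hu.1
  have hfs : f s = g s := by
    refine le_antisymm ?_ hsT.2
    by_contra! hlt
    obtain ⟨u, hu, hfu⟩ := intermediate_value_Ioo' hsb.le
      ((hf.sub hg).mono (Icc_subset_Icc hsT.1.1 le_rfl)) ⟨sub_neg.2 hb, sub_pos.2 hlt⟩
    exact (above u ⟨hu.1, hu.2.le⟩).ne (sub_eq_zero.1 hfu)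
  obtain ⟨f', g', hf', hg', hlt⟩ := hfg s ⟨hsT.1.1, hsb⟩ hfs
  have hslope : ∀ᶠ u in 𝓝[>] s, 0 < slope (fun t => f t - g t) s u := by
    have := hasDerivWithinAt_iff_tendsto_slope.1 (hf'.sub hg')
    rw [Ici_sdiff_left] at this
    exact this.eventually_const_lt (sub_pos.2 hlt)
  obtain ⟨u, hu, hsu⟩ := (hslope.and (Ioo_mem_nhdsGT hsb)).exists
  rw [slope_def_field, hfs, sub_self, sub_zero, div_pos_iff_of_pos_right (sub_pos.2 hsu.1)] at hu
  exact (above u ⟨hsu.1, hsu.2.le⟩).not_gt (sub_pos.1 hu)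

lemma lipschitzWith_sub_div_min {A Q m δ M : ℝ} (hδ : 0 < δ) (hm : m ≤ -δ) (hQ : |Q| ≤ M) :
    LipschitzWith (M / δ ^ 2).toNNReal (fun z => A - Q / min z m) := by
  have hM : 0 ≤ M := (abs_nonneg Q).trans hQ
  refine LipschitzWith.of_dist_le_mul fun z w => ?_
  have hu : min z m ≤ -δ := (min_le_right _ _).trans hm
  have hv : min w m ≤ -δ := (min_le_right _ _).trans hm
  have huv : δ ^ 2 ≤ min z m * min w m := by nlinarith
  have hmin : |min z m - min w m| ≤ |z - w| :=
    (abs_min_sub_min_le_max _ _ _ _).trans (by simp)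
  rw [Real.dist_eq, Real.dist_eq, Real.coe_toNNReal _ (div_nonneg hM (sq_nonneg δ)),
    show A - Q / min z m - (A - Q / min w m) = Q * (min z m - min w m) / (min z m * min w m) by
      field_simp [(by linarith : min z m ≠ 0), (by linarith : min w m ≠ 0)]; ring,
    abs_div, abs_mul, abs_of_pos (by nlinarith : 0 < min z m * min w m)]
  calc |Q| * |min z m - min w m| / (min z m * min w m)
      ≤ M * |z - w| / δ ^ 2 := by gcongr
    _ = M / δ ^ 2 * |z - w| := by ring

lemma continuousWithinAt_of_le_of_le {α : Type*} [TopologicalSpace α] {f g k : α → ℝ}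
    {s : Set α} {t : α} (hg : ContinuousWithinAt g s t) (hk : ContinuousWithinAt k s t)
    (hgt : g t = f t) (hkt : k t = f t) (hgf : ∀ σ ∈ s, g σ ≤ f σ) (hfk : ∀ σ ∈ s, f σ ≤ k σ) :
    ContinuousWithinAt f s t :=
  tendsto_of_tendsto_of_tendsto_of_le_of_le' (hgt ▸ hg) (hkt ▸ hk)
    (eventually_nhdsWithin_of_forall hgf) (eventually_nhdsWithin_of_forall hfk)

/-- Solutions are built by integrating from `φ = 1` towards `φ = 0`, so a function whose slope
exceeds the vector field bounds them from below, and one whose slope is below it from above. -/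
def IsLowerBarrier (h q : ℝ → ℝ) (c : ℝ) (w : ℝ → ℝ) : Prop :=
  ∀ φ ∈ Ioo (0:ℝ) 1, ∃ d, HasDerivAt w d φ ∧ h φ - c - q φ / w φ < d

def IsUpperBarrier (h q : ℝ → ℝ) (c : ℝ) (w : ℝ → ℝ) : Prop :=
  ∀ φ ∈ Ioo (0:ℝ) 1, ∃ d, HasDerivAt w d φ ∧ d < h φ - c - q φ / w φ

section Barriers

variable {h q lo hi x : ℝ → ℝ} {c a : ℝ}

lemma exists_pos_forall_le_neg (hhi : ContinuousOn hi (Icc 0 1))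
    (hhi_neg : ∀ φ ∈ Ioc 0 1, hi φ < 0) (ha : 0 < a) :
    ∃ δ > 0, ∀ t ∈ Icc a 1, hi t ≤ -δ := by
  obtain ⟨δ, hδ, hle⟩ := isCompact_Icc.exists_forall_le' (f := fun t => -hi t)
    (hhi.neg.mono (Icc_subset_Icc ha.le le_rfl))
    (fun t ht => neg_pos.2 (hhi_neg t ⟨ha.trans_le ht.1, ht.2⟩))
  exact ⟨δ, hδ, fun t ht => le_neg.1 (hle t ht)⟩

/-- The vector field truncated below `hi` is globally Lipschitz and bounded on `[a, 1]`, so it has a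
solution there; the barriers show a posteriori that the truncation is never active. -/
lemma exists_truncated_solution (hh : ContinuousOn h (Icc 0 1)) (hq : ContinuousOn q (Icc 0 1))
    (hhi : ContinuousOn hi (Icc 0 1)) (hhi_neg : ∀ φ ∈ Ioc 0 1, hi φ < 0) (ha : 0 < a)
    (ha1 : a ≤ 1) (b : ℝ) :
    ∃ x : ℝ → ℝ, x 1 = b ∧
      ∀ t ∈ Icc a 1, HasDerivWithinAt x (h t - c - q t / min (x t) (hi t)) (Icc a 1) t := by
  have hsub : Icc a 1 ⊆ Icc 0 1 := Icc_subset_Icc ha.le le_rfl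
  obtain ⟨δ, hδ, hhiδ⟩ := exists_pos_forall_le_neg hhi hhi_neg ha
  obtain ⟨Mh, hMh⟩ := isCompact_Icc.exists_bound_of_continuousOn hh
  obtain ⟨Mq, hMq⟩ := isCompact_Icc.exists_bound_of_continuousOn hq
  refine exists_hasDerivWithinAt_Icc_of_lipschitzWith (C := (Mh + |c| + Mq / δ).toNNReal) ha1 b
    (fun t ht => lipschitzWith_sub_div_min hδ (hhiδ t ht) (hMq t (hsub ht))) (fun z => ?_)
    (fun t ht z => ?_)
  · exact ((hh.mono hsub).sub continuousOn_const).sub ((hq.mono hsub).div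
      (continuousOn_const.inf (hhi.mono hsub))
      fun t ht => ((min_le_right _ _).trans_lt (by linarith [hhiδ t ht])).ne)
  · have hmin : δ ≤ |min z (hi t)| := by
      rw [abs_of_neg (by linarith [min_le_right z (hi t), hhiδ t ht])]
      linarith [min_le_right z (hi t), hhiδ t ht]
    have hdiv : |q t / min z (hi t)| ≤ Mq / δ := by
      rw [abs_div]
      exact div_le_div₀ ((abs_nonneg _).trans (hMq t (hsub ht))) (hMq t (hsub ht)) hδ hmin
    refine le_trans ?_ (Real.le_coe_toNNReal _)
    calc ‖h t - c - q t / min z (hi t)‖ ≤ |h t| + |c| + |q t / min z (hi t)| :=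
          (abs_sub _ _).trans (add_le_add_left (abs_sub _ _) _)
      _ ≤ Mh + |c| + Mq / δ := by gcongr; exact hMh t (hsub ht)

lemma truncated_solution_mem_Ioo (hlo : ContinuousOn lo (Icc 0 1)) (hlo' : IsLowerBarrier h q c lo)
    (hhi : ContinuousOn hi (Icc 0 1)) (hhi' : IsUpperBarrier h q c hi) (ha : 0 < a)
    (hx : ∀ t ∈ Icc a 1, HasDerivWithinAt x (h t - c - q t / min (x t) (hi t)) (Icc a 1) t)
    (hx1 : lo 1 < x 1 ∧ x 1 < hi 1) :
    ∀ t ∈ Icc a 1, lo t < x t ∧ x t < hi t := by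
  have hsub : Icc a 1 ⊆ Icc 0 1 := Icc_subset_Icc ha.le le_rfl
  have hxc : ContinuousOn x (Icc a 1) := fun t ht => (hx t ht).continuousWithinAt
  have hxIci (t : ℝ) (ht : t ∈ Ico a 1) := (hx t (Ico_subset_Icc_self ht)).mono_of_mem_nhdsWithin
    (Icc_mem_nhdsGE_of_mem ht)
  have hφ (t : ℝ) (ht : t ∈ Ico a 1) : t ∈ Ioo (0:ℝ) 1 := ⟨ha.trans_le ht.1, ht.2⟩
  have below_hi := lt_on_Icc_of_hasDerivWithinAt_Ici hxc (hhi.mono hsub) hx1.2 fun t ht hxt => by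
    obtain ⟨d, hd, hdlt⟩ := hhi' t (hφ t ht)
    refine ⟨_, d, hxIci t ht, hd.hasDerivWithinAt, ?_⟩
    rwa [hxt, min_self]
  refine fun t ht => ⟨?_, below_hi t ht⟩
  refine lt_on_Icc_of_hasDerivWithinAt_Ici (hlo.mono hsub) hxc hx1.1 (fun t ht hxt => ?_) t ht
  obtain ⟨d, hd, hdlt⟩ := hlo' t (hφ t ht)
  refine ⟨d, _, hd.hasDerivWithinAt, hxIci t ht, ?_⟩
  rwa [min_eq_left (below_hi t (Ico_subset_Icc_self ht)).le, ← hxt]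

lemma truncated_solution_unique {y : ℝ → ℝ} {a' : ℝ} (hq : ContinuousOn q (Icc 0 1))
    (hhi : ContinuousOn hi (Icc 0 1)) (hhi_neg : ∀ φ ∈ Ioc 0 1, hi φ < 0) (ha' : 0 < a')
    (haa' : a ≤ a')
    (hx : ∀ t ∈ Icc a 1, HasDerivWithinAt x (h t - c - q t / min (x t) (hi t)) (Icc a 1) t)
    (hy : ∀ t ∈ Icc a' 1, HasDerivWithinAt y (h t - c - q t / min (y t) (hi t)) (Icc a' 1) t)
    (h1 : x 1 = y 1) :
    EqOn x y (Icc a' 1) := by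
  obtain ⟨δ, hδ, hhiδ⟩ := exists_pos_forall_le_neg hhi hhi_neg ha'
  obtain ⟨Mq, hMq⟩ := isCompact_Icc.exists_bound_of_continuousOn hq
  have hx' (t : ℝ) (ht : t ∈ Icc a' 1) :=
    (hx t ⟨haa'.trans ht.1, ht.2⟩).mono (Icc_subset_Icc haa' le_rfl)
  have hIic {z : ℝ → ℝ}
      (hz : ∀ t ∈ Icc a' 1, HasDerivWithinAt z (h t - c - q t / min (z t) (hi t)) (Icc a' 1) t)
      (t : ℝ) (ht : t ∈ Ioc a' 1) :=
    (hz t (Ioc_subset_Icc_self ht)).mono_of_mem_nhdsWithin (Icc_mem_nhdsLE_of_mem ht)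
  exact ODE_solution_unique_of_mem_Icc_left (s := fun _ => univ)
    (fun t ht => (lipschitzWith_sub_div_min hδ (hhiδ t (Ioc_subset_Icc_self ht))
      (hMq t (Icc_subset_Icc ha'.le le_rfl (Ioc_subset_Icc_self ht)))).lipschitzOnWith)
    (fun t ht => (hx' t ht).continuousWithinAt) (hIic hx') (fun _ _ => trivial)
    (fun t ht => (hy t ht).continuousWithinAt) (hIic hy) (fun _ _ => trivial) h1

/-- By uniqueness the solutions on the intervals `[a, 1]` agree where they overlap, so they glue. -/
lemma exists_eqOn_truncated_solution (hh : ContinuousOn h (Icc 0 1))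
    (hq : ContinuousOn q (Icc 0 1)) (hhi : ContinuousOn hi (Icc 0 1))
    (hhi_neg : ∀ φ ∈ Ioc 0 1, hi φ < 0) (b : ℝ) :
    ∃ y : ℝ → ℝ, y 0 = 0 ∧ ∀ t ∈ Ioc (0:ℝ) 1, ∃ x : ℝ → ℝ, x 1 = b ∧
      (∀ s ∈ Icc (t / 2) 1,
        HasDerivWithinAt x (h s - c - q s / min (x s) (hi s)) (Icc (t / 2) 1) s) ∧
      EqOn y x (Ioc (t / 2) 1) := by
  choose! X hX1 hX using fun a (ha : 0 < a) (ha1 : a ≤ 1) =>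
    exists_truncated_solution (c := c) hh hq hhi hhi_neg ha ha1 b
  have hXagree {a a' : ℝ} (ha : 0 < a) (haa' : a ≤ a') (ha' : a' ≤ 1) :
      EqOn (X a) (X a') (Icc a' 1) :=
    truncated_solution_unique hq hhi hhi_neg (ha.trans_le haa') haa' (hX a ha (haa'.trans ha'))
      (hX a' (ha.trans_le haa') ha')
      (by rw [hX1 a ha (haa'.trans ha'), hX1 a' (ha.trans_le haa') ha'])
  refine ⟨fun t => if 0 < t then X (t / 2) t else 0, if_neg (lt_irrefl 0), fun t ht =>
    ⟨X (t / 2), hX1 _ (half_pos ht.1) (by linarith [ht.2]),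
      hX _ (half_pos ht.1) (by linarith [ht.2]), fun σ hσ => ?_⟩⟩
  have hσ0 : 0 < σ := (half_pos ht.1).trans hσ.1
  simp only [if_pos hσ0]
  rcases le_total (σ / 2) (t / 2) with hle | hle
  · exact hXagree (half_pos hσ0) hle (by linarith [ht.2]) ⟨hσ.1.le, hσ.2⟩
  · exact (hXagree (half_pos ht.1) hle (by linarith [hσ.2]) ⟨by linarith, hσ.2⟩).symm

/-- Squeezing the glued solution between `lo` and `hi` gives the boundary value `0` at `φ = 0`. -/
theorem exists_PC_of_barriers {b : ℝ} (hh : ContinuousOn h (Icc 0 1))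
    (hq : ContinuousOn q (Icc 0 1)) (hlo : ContinuousOn lo (Icc 0 1)) (hlo0 : lo 0 = 0)
    (hlo' : IsLowerBarrier h q c lo) (hhi : ContinuousOn hi (Icc 0 1)) (hhi0 : hi 0 = 0)
    (hhi' : IsUpperBarrier h q c hi) (hhi_neg : ∀ φ ∈ Ioc 0 1, hi φ < 0)
    (hb : lo 1 < b ∧ b < hi 1) :
    ∃ y : ℝ → ℝ, PC h q c y ∧ y 1 = b := by
  obtain ⟨y, hy0, hyx⟩ := exists_eqOn_truncated_solution (c := c) hh hq hhi hhi_neg b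
  have hmem {t : ℝ} (ht : t ∈ Ioc (0:ℝ) 1) : t ∈ Ioc (t / 2) 1 := ⟨half_lt_self ht.1, ht.2⟩
  have hybnd (t : ℝ) (ht : t ∈ Ioc 0 1) : lo t < y t ∧ y t < hi t := by
    obtain ⟨x, hx1, hx, hxy⟩ := hyx t ht
    rw [hxy (hmem ht)]
    exact truncated_solution_mem_Ioo hlo hlo' hhi hhi' (half_pos ht.1) hx (hx1 ▸ hb) t
      (Ioc_subset_Icc_self (hmem ht))
  refine ⟨y, ⟨⟨fun t ht => ?_, fun t ht => ?_, fun t ht => ?_⟩, hy0⟩, ?_⟩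
  · rcases ht.1.eq_or_lt with rfl | ht0
    · have hsq (σ : ℝ) (hσ : σ ∈ Icc (0:ℝ) 1) : lo σ ≤ y σ ∧ y σ ≤ hi σ := by
        rcases hσ.1.eq_or_lt with rfl | hσ0
        · simp only [hy0, hlo0, hhi0, le_rfl, and_self]
        · exact ⟨(hybnd σ ⟨hσ0, hσ.2⟩).1.le, (hybnd σ ⟨hσ0, hσ.2⟩).2.le⟩
      exact continuousWithinAt_of_le_of_le (hlo 0 ht) (hhi 0 ht) (by rw [hlo0, hy0])
        (by rw [hhi0, hy0]) (fun σ hσ => (hsq σ hσ).1) (fun σ hσ => (hsq σ hσ).2)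
    · obtain ⟨x, -, hx, hxy⟩ := hyx t ⟨ht0, ht.2⟩
      have hnhds : Ioc (t / 2) 1 ∈ 𝓝[Icc 0 1] t := mem_of_superset
        (inter_mem_nhdsWithin _ (Ioi_mem_nhds (half_lt_self ht0))) fun σ hσ => ⟨hσ.2, hσ.1.2⟩
      exact ((hx t (Ioc_subset_Icc_self (hmem ⟨ht0, ht.2⟩))).continuousWithinAt
        |>.mono_of_mem_nhdsWithin (mem_of_superset hnhds Ioc_subset_Icc_self))
        |>.congr_of_eventuallyEq (mem_of_superset hnhds hxy) (hxy (hmem ⟨ht0, ht.2⟩))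
  · have ht' : t ∈ Ioc 0 1 := ⟨ht.1, ht.2.le⟩
    obtain ⟨x, -, hx, hxy⟩ := hyx t ht'
    have hd := (hx t (Ioc_subset_Icc_self (hmem ht'))).hasDerivAt
      (Icc_mem_nhds (half_lt_self ht.1) ht.2)
    rw [← hxy (hmem ht'), min_eq_left (hybnd t ht').2.le] at hd
    exact hd.congr_of_eventuallyEq (mem_of_superset (Ioo_mem_nhds (half_lt_self ht.1) ht.2)
      fun σ hσ => hxy ⟨hσ.1, hσ.2.le⟩)
  · exact (hybnd t ⟨ht.1, ht.2.le⟩).2.trans (hhi_neg t ⟨ht.1, ht.2.le⟩)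
  · obtain ⟨x, hx1, -, hxy⟩ := hyx 1 ⟨one_pos, le_rfl⟩
    rw [hxy (hmem ⟨one_pos, le_rfl⟩), hx1]

end Barriers

lemma isLowerBarrier_sub_mul {h q z : ℝ → ℝ} {c₁ c₂ : ℝ} (hq_pos : ∀ φ ∈ Ioo (0:ℝ) 1, 0 < q φ)
    (hz : SolODE h q c₁ z) (hc : c₁ < c₂) :
    IsLowerBarrier h q c₂ (fun φ => z φ - (c₂ - c₁) * φ) := by
  intro φ hφ
  refine ⟨h φ - c₁ - q φ / z φ - (c₂ - c₁),
    ((hz.2.1 φ hφ).sub ((hasDerivAt_id' φ).const_mul (c₂ - c₁))).congr_deriv (by ring), ?_⟩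
  have hshift : z φ - (c₂ - c₁) * φ < z φ := by nlinarith [hφ.1]
  have hrecip : q φ / z φ < q φ / (z φ - (c₂ - c₁) * φ) := by
    simpa only [div_eq_mul_one_div (q φ)] using
      mul_lt_mul_of_pos_left (one_div_lt_one_div_of_neg_of_lt (hz.2.2 φ hφ) hshift) (hq_pos φ hφ)
  linarith

lemma isUpperBarrier_of_lt {h q v : ℝ → ℝ} {c c' : ℝ} (hv : SolODE h q c' v) (hc : c < c') :
    IsUpperBarrier h q c v :=
  fun φ hφ => ⟨_, hv.2.1 φ hφ, by linarith⟩

theorem exists_PC_of_lt_of_lt {h q z v : ℝ → ℝ} {c₁ c₂ c₃ b : ℝ}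
    (hh : ContinuousOn h (Icc 0 1)) (hq : ContinuousOn q (Icc 0 1))
    (hq_pos : ∀ φ ∈ Ioo (0:ℝ) 1, 0 < q φ) (hz : PC h q c₁ z) (hv : PC h q c₃ v)
    (h12 : c₁ < c₂) (h23 : c₂ < c₃) (hzb : z 1 - (c₂ - c₁) < b) (hbv : b < v 1) (hv1 : v 1 < 0) :
    ∃ y : ℝ → ℝ, PC h q c₂ y ∧ y 1 = b := by
  refine exists_PC_of_barriers hh hq
    (hz.1.1.sub (continuousOn_const.mul continuousOn_id)) (by simp [hz.2])
    (isLowerBarrier_sub_mul hq_pos hz.1 h12) hv.1.1 hv.2 (isUpperBarrier_of_lt hv.1 h23)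
    (fun φ hφ => ?_) ⟨by simpa using hzb, hbv⟩
  rcases hφ.2.eq_or_lt with rfl | hφ1
  · exact hv1
  · exact hv.1.2.2 φ ⟨hφ.1, hφ1⟩

theorem minEndpoint_le_sub {h q β : ℝ → ℝ} {cstar c₁ c₂ : ℝ}
    (hh : ContinuousOn h (Icc 0 1)) (hq : ContinuousOn q (Icc 0 1))
    (hq_pos : ∀ φ ∈ Ioo (0:ℝ) 1, 0 < q φ)
    (hβ : ∀ c : ℝ, cstar < c → β c < 0 ∧
      ∀ b : ℝ, b < 0 → ((∃ z : ℝ → ℝ, PC h q c z ∧ z 1 = b) ↔ β c ≤ b))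
    (h1 : cstar < c₁) (h12 : c₁ < c₂) :
    β c₂ ≤ β c₁ - (c₂ - c₁) := by
  obtain ⟨hβ₁, hiff₁⟩ := hβ c₁ h1
  obtain ⟨hβ₂, hiff₂⟩ := hβ c₂ (h1.trans h12)
  obtain ⟨hβ₃, hiff₃⟩ := hβ (c₂ + 1) (by linarith)
  obtain ⟨z, hz, hz1⟩ := (hiff₁ _ hβ₁).2 le_rfl
  refine le_of_forall_gt_imp_ge_of_dense fun b hb => ?_
  rcases le_or_gt 0 b with hb0 | hb0
  · linarith
  have hb' : max (β (c₂ + 1)) (b / 2) < 0 := max_lt hβ₃ (by linarith)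
  obtain ⟨v, hv, hv1⟩ := (hiff₃ _ hb').2 (le_max_left _ _)
  refine (hiff₂ b hb0).1 (exists_PC_of_lt_of_lt hh hq hq_pos hz hv h12 (lt_add_one c₂)
    (by linarith) ?_ (hv1 ▸ hb'))
  rw [hv1]
  exact (by linarith : b < b / 2).trans_le (le_max_right _ _)

theorem stmt_10_general (h q : ℝ → ℝ) (cstar : ℝ) (β : ℝ → ℝ)
    (hq_cont : ContinuousOn q (Icc 0 1))
    (hq_pos : ∀ φ ∈ Ioo (0:ℝ) 1, 0 < q φ)
    (hh_cont : ContinuousOn h (Icc 0 1))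
    (hβ : ∀ c : ℝ, cstar < c → β c < 0 ∧
      ∀ b : ℝ, b < 0 → ((∃ z : ℝ → ℝ, PC h q c z ∧ z 1 = b) ↔ β c ≤ b)) :
    (∀ c₁ c₂ : ℝ, cstar < c₁ → c₁ < c₂ → β c₂ < β c₁) ∧
    Tendsto β atTop atBot := by
  have key {c₁ c₂ : ℝ} (h1 : cstar < c₁) (h12 : c₁ < c₂) : β c₂ ≤ β c₁ - (c₂ - c₁) :=
    minEndpoint_le_sub hh_cont hq_cont hq_pos hβ h1 h12
  refine ⟨fun c₁ c₂ h1 h12 => by linarith [key h1 h12], ?_⟩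
  refine tendsto_atBot_mono' atTop ?_
    (tendsto_atBot_add_const_left _ (β (cstar + 1) + (cstar + 1)) tendsto_neg_atTop_atBot)
  filter_upwards [eventually_gt_atTop (cstar + 1)] with c hc
  linarith [key (lt_add_one cstar) hc]

/-- the threshold β(c) is strictly decreasing for c > c* and
tends to −∞ as c → +∞. -/
theorem stmt_10 (f h q : ℝ → ℝ) (cstar : ℝ) (β : ℝ → ℝ)
    (hq_cont : ContinuousOn q (Icc 0 1))
    (hq_pos : ∀ φ ∈ Ioo (0:ℝ) 1, 0 < q φ)
    (hq0 : q 0 = 0) (hq1 : q 1 = 0)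
    (hq_lim : ∃ L : ℝ, ∀ᶠ φ in 𝓝[>] (0:ℝ), q φ / φ ≤ L)
    (hf0 : f 0 = 0)
    (hf' : ∀ x ∈ Icc (0:ℝ) 1, HasDerivWithinAt f (h x) (Icc 0 1) x)
    (hh_cont : ContinuousOn h (Icc 0 1))
    (hcstar : ∀ c : ℝ, (∃ z : ℝ → ℝ, PC00 h q c z) ↔ cstar ≤ c)
    (hβ : ∀ c : ℝ, cstar < c → β c < 0 ∧
      ∀ b : ℝ, b < 0 → ((∃ z : ℝ → ℝ, PC h q c z ∧ z 1 = b) ↔ β c ≤ b)) :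
    (∀ c₁ c₂ : ℝ, cstar < c₁ → c₁ < c₂ → β c₂ < β c₁) ∧
    Tendsto β atTop atBot :=
  stmt_10_general h q cstar β hq_cont hq_pos hh_cont hβ
end
end

section
/- Assume (q), let f ∈ C¹[0,1] with f(0)=0, h := f′, let c* be the threshold for problem (P_c⁰⁰), let z* be the solution of (P_{c*}⁰⁰), and for c ∈ ℝ let ζ_c be the unique function in C⁰[0,1] ∩ C¹(0,1) with ζ̇_c(φ) = h(φ) − c − q(φ)/ζ_c(φ) on (0,1), ζ_c < 0 on (0,1), ζ_c(1) = 0. Then: (i) if c₂ > c₁ then ζ_{c₂}(φ) > ζ_{c₁}(φ) for all φ ∈ (0,1); (ii) for every φ ∈ [0,1], ζ_c(φ) → z*(φ) as c → c*. -/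
open Set Filter Topology MeasureTheory

noncomputable section

/-!
For solutions `z₁, z₂` with parameters `c₁ < c₂`, the difference `d = z₂ - z₁` satisfies the
linear equation `d' = (c₁ - c₂) + k d` with `k = q / (z₁ z₂) > 0` on `(0,1)`. Wherever `d ≤ 0` it
therefore decreases at a definite rate, so `d(1) = 0` forces `d > 0` on `(0,1)`. Then
`d + (c₂ - c₁) φ` is nondecreasing, which gives `d(φ) ≤ (c₂ - c₁)(1 - φ)`. Hence `c ↦ ζ_c(φ)` is
increasing and `1`-Lipschitz, in particular continuous at `c*`, where `ζ_{c*} = z*` by uniqueness.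
-/

namespace SolODE

variable {h q : ℝ → ℝ} {c₁ c₂ : ℝ} {z₁ z₂ : ℝ → ℝ}

theorem hasDerivAt_sub (h₁ : SolODE h q c₁ z₁) (h₂ : SolODE h q c₂ z₂) {φ : ℝ}
    (hφ : φ ∈ Ioo (0:ℝ) 1) :
    HasDerivAt (fun x => z₂ x - z₁ x)
      (c₁ - c₂ + q φ / (z₁ φ * z₂ φ) * (z₂ φ - z₁ φ)) φ := by
  have hz₁ := (h₁.2.2 φ hφ).ne
  have hz₂ := (h₂.2.2 φ hφ).ne
  exact ((h₂.2.1 φ hφ).sub (h₁.2.1 φ hφ)).congr_deriv (by field_simp; ring)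

theorem lt_of_param_lt (hq : ∀ φ ∈ Ioo (0:ℝ) 1, 0 < q φ)
    (h₁ : SolODE h q c₁ z₁) (h₁1 : z₁ 1 = 0) (h₂ : SolODE h q c₂ z₂) (h₂1 : z₂ 1 = 0)
    (hc : c₁ < c₂) {φ₀ : ℝ} (hφ₀ : φ₀ ∈ Ioo (0:ℝ) 1) : z₁ φ₀ < z₂ φ₀ := by
  by_contra! hle
  have hsub : Icc φ₀ 1 ⊆ Icc 0 1 := Icc_subset_Icc_left hφ₀.1.le
  have hmem : ∀ x ∈ Ico φ₀ 1, x ∈ Ioo (0:ℝ) 1 := fun x hx => ⟨hφ₀.1.trans_le hx.1, hx.2⟩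
  -- `d ≤ 0` forces `d' ≤ c₁ - c₂ < (c₁ - c₂) / 2`, so `d` cannot cross this line.
  have hbarrier : ∀ x ∈ Icc φ₀ 1, z₂ x - z₁ x ≤ (c₁ - c₂) / 2 * (x - φ₀) := by
    refine image_le_of_deriv_right_lt_deriv_boundary' ((h₂.1.sub h₁.1).mono hsub)
      (fun x hx => (hasDerivAt_sub h₁ h₂ (hmem x hx)).hasDerivWithinAt)
      (by simpa using hle) (by fun_prop)
      (fun x _ => (((hasDerivAt_id x).sub_const φ₀).const_mul _).hasDerivWithinAt) ?_
    intro x hx hdx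
    have hx' := hmem x hx
    have hk : 0 < q x / (z₁ x * z₂ x) :=
      div_pos (hq x hx') (mul_pos_of_neg_of_neg (h₁.2.2 x hx') (h₂.2.2 x hx'))
    have hd : z₂ x - z₁ x ≤ 0 := hdx.trans_le (mul_nonpos_of_nonpos_of_nonneg
      (by linarith) (sub_nonneg.2 hx.1))
    nlinarith
  have h1 := hbarrier 1 ⟨hφ₀.2.le, le_rfl⟩
  rw [h₁1, h₂1, sub_zero] at h1
  nlinarith [hφ₀.2]

theorem sub_le_of_param_lt (hq : ∀ φ ∈ Ioo (0:ℝ) 1, 0 < q φ)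
    (h₁ : SolODE h q c₁ z₁) (h₁1 : z₁ 1 = 0) (h₂ : SolODE h q c₂ z₂) (h₂1 : z₂ 1 = 0)
    (hc : c₁ < c₂) {φ : ℝ} (hφ : φ ∈ Icc (0:ℝ) 1) :
    z₂ φ - z₁ φ ≤ (c₂ - c₁) * (1 - φ) := by
  have hmono : MonotoneOn (fun x => z₂ x - z₁ x + (c₂ - c₁) * x) (Icc 0 1) := by
    refine monotoneOn_of_hasDerivWithinAt_nonneg (convex_Icc 0 1)
      (h₂.1.sub h₁.1 |>.add (by fun_prop))
      (f' := fun x => q x / (z₁ x * z₂ x) * (z₂ x - z₁ x)) ?_ ?_ <;>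
      rw [interior_Icc] <;> intro x hx
    · exact ((hasDerivAt_sub h₁ h₂ hx).add ((hasDerivAt_id x).const_mul (c₂ - c₁))
        ).hasDerivWithinAt.congr_deriv (by ring)
    · exact mul_nonneg (div_pos (hq x hx)
        (mul_pos_of_neg_of_neg (h₁.2.2 x hx) (h₂.2.2 x hx))).le
        (sub_nonneg.2 (lt_of_param_lt hq h₁ h₁1 h₂ h₂1 hc hx).le)
  have := hmono hφ ⟨zero_le_one, le_rfl⟩ hφ.2
  simp only [h₁1, h₂1] at this
  linarith

theorem le_of_param_lt (hq : ∀ φ ∈ Ioo (0:ℝ) 1, 0 < q φ)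
    (h₁ : SolODE h q c₁ z₁) (h₁1 : z₁ 1 = 0) (h₂ : SolODE h q c₂ z₂) (h₂1 : z₂ 1 = 0)
    (hc : c₁ < c₂) {φ : ℝ} (hφ : φ ∈ Icc (0:ℝ) 1) : z₁ φ ≤ z₂ φ :=
  ContinuousWithinAt.closure_le (by rwa [closure_Ioo zero_ne_one])
    ((h₁.1 φ hφ).mono Ioo_subset_Icc_self) ((h₂.1 φ hφ).mono Ioo_subset_Icc_self)
    fun _ hx => (lt_of_param_lt hq h₁ h₁1 h₂ h₂1 hc hx).le

theorem lipschitzWith_param (hq : ∀ φ ∈ Ioo (0:ℝ) 1, 0 < q φ) {ζ : ℝ → ℝ → ℝ}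
    (hζ : ∀ c : ℝ, SolODE h q c (ζ c) ∧ ζ c 1 = 0) {φ : ℝ} (hφ : φ ∈ Icc (0:ℝ) 1) :
    LipschitzWith 1 fun c => ζ c φ := by
  refine LipschitzWith.of_le_add fun c₁ c₂ => ?_
  rw [Real.dist_eq]
  rcases lt_trichotomy c₁ c₂ with hc | rfl | hc
  · linarith [le_of_param_lt hq (hζ c₁).1 (hζ c₁).2 (hζ c₂).1 (hζ c₂).2 hc hφ,
      abs_nonneg (c₁ - c₂)]
  · simp
  · have := sub_le_of_param_lt hq (hζ c₂).1 (hζ c₂).2 (hζ c₁).1 (hζ c₁).2 hc hφ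
    nlinarith [le_abs_self (c₁ - c₂), hφ.1]

end SolODE

theorem stmt_12_general (h q : ℝ → ℝ) (cstar : ℝ) (zstar : ℝ → ℝ) (ζ : ℝ → ℝ → ℝ)
    (hq_pos : ∀ φ ∈ Ioo (0:ℝ) 1, 0 < q φ)
    (hzstar : PC00 h q cstar zstar)
    (hζ : ∀ c : ℝ, SolODE h q c (ζ c) ∧ ζ c 1 = 0)
    (hζuniq : ∀ c : ℝ, ∀ w : ℝ → ℝ, SolODE h q c w ∧ w 1 = 0 → EqOn w (ζ c) (Icc 0 1)) :
    (∀ c₁ c₂ : ℝ, c₁ < c₂ → ∀ φ ∈ Ioo (0:ℝ) 1, ζ c₁ φ < ζ c₂ φ) ∧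
    (∀ φ ∈ Icc (0:ℝ) 1, Tendsto (fun c => ζ c φ) (𝓝 cstar) (𝓝 (zstar φ))) := by
  refine ⟨fun c₁ c₂ hc φ hφ =>
    SolODE.lt_of_param_lt hq_pos (hζ c₁).1 (hζ c₁).2 (hζ c₂).1 (hζ c₂).2 hc hφ, fun φ hφ => ?_⟩
  rw [hζuniq cstar zstar ⟨hzstar.1.1, hzstar.2⟩ hφ]
  exact (SolODE.lipschitzWith_param hq_pos hζ hφ).continuous.tendsto cstar

/-- monotonicity in c of the family ζ_c and convergence
ζ_c → z* pointwise on [0,1] as c → c*. -/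
theorem stmt_12 (f h q : ℝ → ℝ) (cstar : ℝ) (zstar : ℝ → ℝ) (ζ : ℝ → ℝ → ℝ)
    (hq_cont : ContinuousOn q (Icc 0 1))
    (hq_pos : ∀ φ ∈ Ioo (0:ℝ) 1, 0 < q φ)
    (hq0 : q 0 = 0) (hq1 : q 1 = 0)
    (hq_lim : ∃ L : ℝ, ∀ᶠ φ in 𝓝[>] (0:ℝ), q φ / φ ≤ L)
    (hf0 : f 0 = 0)
    (hf' : ∀ x ∈ Icc (0:ℝ) 1, HasDerivWithinAt f (h x) (Icc 0 1) x)
    (hh_cont : ContinuousOn h (Icc 0 1))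
    (hcstar : ∀ c : ℝ, (∃ z : ℝ → ℝ, PC00 h q c z) ↔ cstar ≤ c)
    (hzstar : PC00 h q cstar zstar)
    (hζ : ∀ c : ℝ, SolODE h q c (ζ c) ∧ ζ c 1 = 0)
    (hζuniq : ∀ c : ℝ, ∀ w : ℝ → ℝ, SolODE h q c w ∧ w 1 = 0 → EqOn w (ζ c) (Icc 0 1)) :
    (∀ c₁ c₂ : ℝ, c₁ < c₂ → ∀ φ ∈ Ioo (0:ℝ) 1, ζ c₁ φ < ζ c₂ φ) ∧
    (∀ φ ∈ Icc (0:ℝ) 1, Tendsto (fun c => ζ c φ) (𝓝 cstar) (𝓝 (zstar φ))) :=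
  stmt_12_general h q cstar zstar ζ hq_pos hzstar hζ hζuniq
end
end

section
/- Assume (q), let f ∈ C¹[0,1] with f(0)=0, h := f′, and for c ∈ ℝ let ζ_c be the unique function in C⁰[0,1] ∩ C¹(0,1) with ζ̇_c(φ) = h(φ) − c − q(φ)/ζ_c(φ) on (0,1), ζ_c < 0 on (0,1), ζ_c(1) = 0. Then ζ_c(0) ≥ −1 − A_c, where A_c := max{ max_{φ∈[0,1]} h(φ) − c , 0 } + max_{φ∈[0,1]} q(φ). -/
open Set Filter Topology MeasureTheory

noncomputable section

theorem aux13 (h q : ℝ → ℝ) (c : ℝ) (ζ : ℝ → ℝ)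
    (hq_cont : ContinuousOn q (Icc 0 1))
    (hq_pos : ∀ φ ∈ Ioo (0:ℝ) 1, 0 < q φ)
    (hq0 : q 0 = 0)
    (hh_cont : ContinuousOn h (Icc 0 1))
    (hζc : ContinuousOn ζ (Icc 0 1))
    (hζd : ∀ φ ∈ Ioo (0:ℝ) 1, HasDerivAt ζ (h φ - c - q φ / ζ φ) φ)
    (hζ1 : ζ 1 = 0) :
    ζ 0 ≥ -1 - (max (sSup (h '' Icc (0:ℝ) 1) - c) 0 + sSup (q '' Icc (0:ℝ) 1)) := by
  set M := max (sSup (h '' Icc (0:ℝ) 1) - c) 0 with hM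
  set Q := sSup (q '' Icc (0:ℝ) 1) with hQdef
  set A := M + Q with hA
  have hbddq : BddAbove (q '' Icc (0:ℝ) 1) :=
    (isCompact_Icc.image_of_continuousOn hq_cont).bddAbove
  have hbddh : BddAbove (h '' Icc (0:ℝ) 1) :=
    (isCompact_Icc.image_of_continuousOn hh_cont).bddAbove
  have hQ0 : 0 ≤ Q := by
    have : q 0 ≤ Q := le_csSup hbddq ⟨0, by simp, rfl⟩
    simpa [hq0] using this
  have hA0 : 0 ≤ A := add_nonneg (le_max_right _ _) hQ0
  by_cases h01 : -1 ≤ ζ 0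
  · linarith
  push_neg at h01
  -- crossing set
  set S : Set ℝ := Icc 0 1 ∩ ζ ⁻¹' {-1} with hSdef
  have hSne : S.Nonempty := by
    have hmem : (-1 : ℝ) ∈ Icc (ζ 0) (ζ 1) := ⟨h01.le, by rw [hζ1]; norm_num⟩
    obtain ⟨t, ht, hte⟩ := intermediate_value_Icc zero_le_one hζc hmem
    exact ⟨t, ht, hte⟩
  have hSclosed : IsClosed S := by
    have : IsClosed (Icc (0:ℝ) 1) := isClosed_Icc
    exact hζc.preimage_isClosed_of_isClosed this isClosed_singleton
  have hSbdd : BddBelow S := ⟨0, fun x hx => hx.1.1⟩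
  set T := sInf S with hT
  have hTS : T ∈ S := hSclosed.csInf_mem hSne hSbdd
  have hT01 : T ∈ Icc (0:ℝ) 1 := hTS.1
  have hζT : ζ T = -1 := hTS.2
  have hTpos : 0 < T := by
    rcases lt_or_eq_of_le hT01.1 with hp | hp
    · exact hp
    · exfalso; rw [← hp] at hζT; linarith
  -- ζ ≤ -1 on [0,T]
  have hle : ∀ x ∈ Icc (0:ℝ) T, ζ x ≤ -1 := by
    intro x hx
    by_contra hgt
    push_neg at hgt
    have hx1 : x ∈ Icc (0:ℝ) 1 := ⟨hx.1, hx.2.trans hT01.2⟩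
    have hmem : (-1 : ℝ) ∈ Icc (ζ 0) (ζ x) := ⟨h01.le, hgt.le⟩
    obtain ⟨t, ht, hte⟩ := intermediate_value_Icc hx.1 (hζc.mono (Icc_subset_Icc le_rfl hx1.2)) hmem
    have htS : t ∈ S := ⟨⟨ht.1, ht.2.trans hx1.2⟩, hte⟩
    have : T ≤ t := csInf_le hSbdd htS
    have hxT : x < T := lt_of_le_of_ne hx.2 (fun he => by rw [he] at hgt; linarith)
    linarith [ht.2]
  -- monotonicity of g x = A*x - ζ x on [0,T]
  have hg : MonotoneOn (fun x => A * x - ζ x) (Icc 0 T) := by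
    apply monotoneOn_of_deriv_nonneg (convex_Icc 0 T)
    · exact (continuous_const.mul continuous_id).continuousOn.sub
        (hζc.mono (Icc_subset_Icc le_rfl hT01.2))
    · intro x hx
      rw [interior_Icc] at hx
      have hx1 : x ∈ Ioo (0:ℝ) 1 := ⟨hx.1, hx.2.trans_le hT01.2⟩
      exact ((hasDerivAt_id x).const_mul A |>.sub (hζd x hx1)).differentiableAt.differentiableWithinAt
    · intro x hx
      rw [interior_Icc] at hx
      have hx1 : x ∈ Ioo (0:ℝ) 1 := ⟨hx.1, hx.2.trans_le hT01.2⟩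
      have hd : HasDerivAt (fun x => A * x - ζ x) (A * 1 - (h x - c - q x / ζ x)) x :=
        ((hasDerivAt_id x).const_mul A).sub (hζd x hx1)
      rw [hd.deriv]
      have hxIcc : x ∈ Icc (0:ℝ) 1 := ⟨hx1.1.le, hx1.2.le⟩
      have hhb : h x ≤ sSup (h '' Icc (0:ℝ) 1) := le_csSup hbddh ⟨x, hxIcc, rfl⟩
      have hqb : q x ≤ Q := le_csSup hbddq ⟨x, hxIcc, rfl⟩
      have hζx : ζ x ≤ -1 := hle x ⟨hx.1.le, hx.2.le⟩
      have hqx : 0 < q x := hq_pos x hx1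
      have hdiv : -(q x / ζ x) ≤ q x := by
        rw [← div_neg]
        exact div_le_self hqx.le (by linarith)
      have hhc : h x - c ≤ M := le_max_of_le_left (by linarith)
      have : h x - c - q x / ζ x ≤ M + Q := by
        have : -(q x / ζ x) ≤ Q := hdiv.trans hqb
        linarith
      simpa [hA] using by linarith
  have h0T : (0:ℝ) ∈ Icc (0:ℝ) T := ⟨le_rfl, hTpos.le⟩
  have hTT : T ∈ Icc (0:ℝ) T := ⟨hTpos.le, le_rfl⟩
  have := hg h0T hTT hTpos.le
  simp only [mul_zero] at this
  -- 0 - ζ 0 ≤ A*T - ζ T = A*T + 1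
  have hAT : A * T ≤ A := by
    calc A * T ≤ A * 1 := by nlinarith [hT01.2]
    _ = A := mul_one A
  rw [hζT] at this
  linarith

/-- lower bound ζ_c(0) ≥ −1 − A_c with
A_c = max{ max h − c, 0 } + max q. -/
theorem stmt_13 (f h q : ℝ → ℝ) (c : ℝ) (ζ : ℝ → ℝ)
    (hq_cont : ContinuousOn q (Icc 0 1))
    (hq_pos : ∀ φ ∈ Ioo (0:ℝ) 1, 0 < q φ)
    (hq0 : q 0 = 0) (hq1 : q 1 = 0)
    (hq_lim : ∃ L : ℝ, ∀ᶠ φ in 𝓝[>] (0:ℝ), q φ / φ ≤ L)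
    (hf0 : f 0 = 0)
    (hf' : ∀ x ∈ Icc (0:ℝ) 1, HasDerivWithinAt f (h x) (Icc 0 1) x)
    (hh_cont : ContinuousOn h (Icc 0 1))
    (hζ : SolODE h q c ζ ∧ ζ 1 = 0) :
    ζ 0 ≥ -1 - (max (sSup (h '' Icc (0:ℝ) 1) - c) 0 + sSup (q '' Icc (0:ℝ) 1)) := by
  obtain ⟨⟨hc, hd, hneg⟩, h1⟩ := hζ
  exact aux13 h q c ζ hq_cont hq_pos hq0 hh_cont hc hd h1
end
end

section
/- Assume (q), let f ∈ C¹[0,1] with f(0)=0, h := f′, and assume q̇(1) := lim_{φ→1⁻} q(φ)/(φ−1) exists and lies in (−∞, 0]. Let c* be the threshold for problem (P_c⁰⁰), let c ≥ c*, and let z be a solution of (P_c). Then the one-sided derivative ż(1) := lim_{φ→1⁻} (z(φ) − z(1))/(φ − 1) exists, and: (i) if z(1) < 0 then ż(1) = h(1) − c; (ii) if z(1) = 0 then ż(1) = ½[ h(1) − c + √( (h(1) − c)² − 4 q̇(1) ) ] when q̇(1) < 0, and ż(1) = max{0, h(1) − c} when q̇(1) = 0. -/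
/-!
If `z 1 < 0` the equation is regular at `φ = 1`, and `ż(1)` is the limit `h 1 - c` of the
right-hand side. If `z 1 = 0`, the difference quotient `u = z / (φ - 1) > 0` satisfies
`(1 - φ) u̇ = u + Q / u - e` with `Q = q / (φ - 1) → q̇(1)` and `e = h - c → b := h 1 - c`.
In the limit, `x * (x + Q / x - e)` becomes `(x - λ) (x - λ')` with roots `λ' ≤ 0 ≤ λ`,
`λ = (b + √(b² - 4 q̇(1))) / 2`. Once `u ≥ m > λ` near `1`, `u` stays there and
`(u - (λ + m) / 2) (1 - φ)` is nondecreasing, contradicting `u (1 - φ) = -z → 0`; once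
`u ≤ m < λ`, it stays there and decreases at least like a multiple of `log (1 - φ)`,
contradicting `u > 0`. Hence `u → λ`.
-/

open Set Filter Topology MeasureTheory

noncomputable section

lemma exists_Ico_of_frequently_of_eventually_nhdsLT {P R : ℝ → Prop} {b : ℝ}
    (hR : ∃ᶠ x in 𝓝[<] b, R x) (hP : ∀ᶠ x in 𝓝[<] b, P x) :
    ∃ a < b, R a ∧ ∀ x ∈ Ico a b, P x := by
  obtain ⟨l, hl, hsub⟩ := mem_nhdsLT_iff_exists_Ioo_subset.1 hP
  obtain ⟨a, hRa, ha⟩ := (hR.and_eventually (Ioo_mem_nhdsLT hl)).exists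
  exact ⟨a, ha.2, hRa, fun x hx => hsub ⟨ha.1.trans_le hx.1, hx.2⟩⟩

lemma le_of_hasDerivAt_pos_of_eq {u u' : ℝ → ℝ} {a b θ : ℝ}
    (hu : ∀ x ∈ Ico a b, HasDerivAt u (u' x) x) (hθ : ∀ x ∈ Ico a b, u x = θ → 0 < u' x)
    (ha : θ ≤ u a) : ∀ x ∈ Ico a b, θ ≤ u x := by
  intro x hx
  have hsub : Icc a x ⊆ Ico a b := Icc_subset_Ico_right hx.2
  exact image_le_of_deriv_right_lt_deriv_boundary' continuousOn_const
    (fun _ _ => hasDerivWithinAt_const _ _ _) ha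
    (fun y hy => (hu y (hsub hy)).continuousAt.continuousWithinAt)
    (fun y hy => (hu y (hsub (Ico_subset_Icc_self hy))).hasDerivWithinAt)
    (fun y hy hy' => hθ y (hsub (Ico_subset_Icc_self hy)) hy'.symm) (right_mem_Icc.2 hx.1)

lemma le_of_hasDerivAt_neg_of_eq {u u' : ℝ → ℝ} {a b θ : ℝ}
    (hu : ∀ x ∈ Ico a b, HasDerivAt u (u' x) x) (hθ : ∀ x ∈ Ico a b, u x = θ → u' x < 0)
    (ha : u a ≤ θ) : ∀ x ∈ Ico a b, u x ≤ θ := by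
  intro x hx
  have := le_of_hasDerivAt_pos_of_eq (u := fun y => -u y) (fun y hy => (hu y hy).neg)
    (fun y hy hy' => neg_pos.2 (hθ y hy (neg_inj.1 hy'))) (neg_le_neg ha) x hx
  exact neg_le_neg_iff.1 this

lemma monotoneOn_Ico_of_hasDerivAt_nonneg {v v' : ℝ → ℝ} {a b : ℝ}
    (hv : ∀ x ∈ Ico a b, HasDerivAt v (v' x) x) (hv' : ∀ x ∈ Ico a b, 0 ≤ v' x) :
    MonotoneOn v (Ico a b) :=
  monotoneOn_of_hasDerivWithinAt_nonneg (convex_Ico a b)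
    (fun x hx => (hv x hx).continuousAt.continuousWithinAt)
    (fun x hx => (hv x (interior_subset hx)).hasDerivWithinAt)
    (fun x hx => hv' x (interior_subset hx))

lemma tendsto_one_sub_nhdsLT_one : Tendsto (fun φ : ℝ => 1 - φ) (𝓝[<] 1) (𝓝[>] 0) := by
  refine tendsto_nhdsWithin_of_tendsto_nhds_of_eventually_within _ ?_ ?_
  · have : Tendsto (fun φ : ℝ => 1 - φ) (𝓝 1) (𝓝 (1 - 1)) := tendsto_const_nhds.sub tendsto_id
    simpa using this.mono_left nhdsWithin_le_nhds
  · filter_upwards [self_mem_nhdsWithin] with φ hφ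
    exact sub_pos.2 (mem_Iio.1 hφ)

lemma hasDerivAt_log_one_sub {φ : ℝ} (hφ : φ < 1) :
    HasDerivAt (fun x => Real.log (1 - x)) (-1 / (1 - φ)) φ := by
  simpa using ((hasDerivAt_id φ).const_sub 1).log (sub_pos.2 hφ).ne'

lemma add_div_sub_ge {lam lam' m x Q e : ℝ} (hlam : 0 ≤ lam) (hlam' : lam' ≤ 0) (hm : lam < m)
    (hx : m ≤ x) (hQ : lam * lam' - (m - lam) * m / 4 ≤ Q) (he : e ≤ lam + lam' + (m - lam) / 4) :
    x - (lam + m) / 2 ≤ x + Q / x - e := by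
  have hx0 : 0 < x := by linarith
  have key : (x - (lam + m) / 2) * x ≤ x ^ 2 + Q - e * x := by
    nlinarith [mul_le_mul_of_nonneg_right he hx0.le,
      mul_nonneg (neg_nonneg.2 hlam') (by linarith : 0 ≤ x - lam),
      mul_nonneg (by linarith : 0 ≤ m - lam) (by linarith : 0 ≤ x - m)]
  have : x + Q / x - e = (x ^ 2 + Q - e * x) / x := by field_simp
  rw [this, le_div_iff₀ hx0]; exact key

lemma add_div_sub_le {lam lam' m x Q e : ℝ} (hlam' : lam' ≤ 0) (hm : m < lam)
    (hx0 : 0 < x) (hx : x ≤ m) (hQ0 : Q ≤ 0) (hQ : Q ≤ lam * lam' + (lam - m) * m / 4)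
    (he : lam + lam' - (lam - m) / 4 ≤ e) :
    x + Q / x - e ≤ -((lam - m) / 2) := by
  have hm0 : 0 < m := hx0.trans_le hx
  have hQx : Q / x ≤ Q / m := by
    rw [div_le_div_iff₀ hx0 hm0]; exact mul_le_mul_of_nonpos_left hx hQ0
  have hQm : Q / m ≤ lam * lam' / m + (lam - m) / 4 := by
    rw [div_add' _ _ _ hm0.ne', div_le_div_iff_of_pos_right hm0]; linarith
  have hroot : m + lam * lam' / m - (lam + lam') ≤ -(lam - m) := by
    have : m + lam * lam' / m - (lam + lam') = -(lam - m) * (m - lam') / m := by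
      field_simp; ring
    rw [this, div_le_iff₀ hm0]; nlinarith
  linarith

lemma eventually_lt_of_hasDerivAt_singular {u Q e : ℝ → ℝ} {lam lam' m : ℝ}
    (hlam : 0 ≤ lam) (hlam' : lam' ≤ 0)
    (hu : ∀ᶠ φ in 𝓝[<] 1, HasDerivAt u ((u φ + Q φ / u φ - e φ) / (1 - φ)) φ)
    (hQ : Tendsto Q (𝓝[<] 1) (𝓝 (lam * lam'))) (he : Tendsto e (𝓝[<] 1) (𝓝 (lam + lam')))
    (hdecay : Tendsto (fun φ => u φ * (1 - φ)) (𝓝[<] 1) (𝓝 0)) (hm : lam < m) :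
    ∀ᶠ φ in 𝓝[<] 1, u φ < m := by
  have hQm : ∀ᶠ φ in 𝓝[<] 1, lam * lam' - (m - lam) * m / 4 ≤ Q φ :=
    hQ.eventually (Ici_mem_nhds (by nlinarith))
  have hem : ∀ᶠ φ in 𝓝[<] 1, e φ ≤ lam + lam' + (m - lam) / 4 :=
    he.eventually (Iic_mem_nhds (by linarith))
  by_contra hfreq
  rw [not_eventually] at hfreq
  obtain ⟨a, ha1, hma, hgood⟩ :=
    exists_Ico_of_frequently_of_eventually_nhdsLT hfreq (hu.and (hQm.and hem))
  have hN : ∀ φ ∈ Ico a 1, m ≤ u φ → u φ - (lam + m) / 2 ≤ u φ + Q φ / u φ - e φ :=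
    fun φ hφ hmφ => add_div_sub_ge hlam hlam' hm hmφ (hgood φ hφ).2.1 (hgood φ hφ).2.2
  have hstay : ∀ φ ∈ Ico a 1, m ≤ u φ :=
    le_of_hasDerivAt_pos_of_eq (fun φ hφ => (hgood φ hφ).1)
      (fun φ hφ hmφ => div_pos (by linarith [hN φ hφ hmφ.ge]) (sub_pos.2 hφ.2)) (not_lt.1 hma)
  have hmono : MonotoneOn (fun φ => (u φ - (lam + m) / 2) * (1 - φ)) (Ico a 1) := by
    refine monotoneOn_Ico_of_hasDerivAt_nonneg
      (fun φ hφ => ((hgood φ hφ).1.sub_const _).mul ((hasDerivAt_id' φ).const_sub 1))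
      (fun φ hφ => ?_)
    have h1φ : (1 : ℝ) - φ ≠ 0 := (sub_pos.2 hφ.2).ne'
    rw [div_mul_cancel₀ _ h1φ]
    linarith [hN φ hφ (hstay φ hφ)]
  have hlim : Tendsto (fun φ => (u φ - (lam + m) / 2) * (1 - φ)) (𝓝[<] 1) (𝓝 0) := by
    simpa [sub_mul] using
      hdecay.sub ((tendsto_one_sub_nhdsLT_one.mono_right nhdsWithin_le_nhds).const_mul _)
  have hpos : 0 < (u a - (lam + m) / 2) * (1 - a) :=
    mul_pos (by linarith [not_lt.1 hma]) (sub_pos.2 ha1)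
  have : (u a - (lam + m) / 2) * (1 - a) ≤ 0 := by
    refine ge_of_tendsto hlim ?_
    filter_upwards [Ioo_mem_nhdsLT ha1] with φ hφ
    exact hmono ⟨le_rfl, ha1⟩ ⟨hφ.1.le, hφ.2⟩ hφ.1.le
  linarith

lemma eventually_gt_of_hasDerivAt_singular {u Q e : ℝ → ℝ} {lam lam' m : ℝ} (hlam' : lam' ≤ 0)
    (hu : ∀ᶠ φ in 𝓝[<] 1, HasDerivAt u ((u φ + Q φ / u φ - e φ) / (1 - φ)) φ)
    (hpos : ∀ᶠ φ in 𝓝[<] 1, 0 < u φ) (hQ0 : ∀ᶠ φ in 𝓝[<] 1, Q φ ≤ 0)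
    (hQ : Tendsto Q (𝓝[<] 1) (𝓝 (lam * lam'))) (he : Tendsto e (𝓝[<] 1) (𝓝 (lam + lam')))
    (hm : m < lam) :
    ∀ᶠ φ in 𝓝[<] 1, m < u φ := by
  rcases le_or_gt m 0 with hm0 | hm0
  · exact hpos.mono fun φ hφ => hm0.trans_lt hφ
  set δ := (lam - m) / 2 with hδ
  have hQm : ∀ᶠ φ in 𝓝[<] 1, Q φ ≤ lam * lam' + (lam - m) * m / 4 :=
    hQ.eventually (Iic_mem_nhds (by nlinarith))
  have hem : ∀ᶠ φ in 𝓝[<] 1, lam + lam' - (lam - m) / 4 ≤ e φ :=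
    he.eventually (Ici_mem_nhds (by linarith))
  by_contra hfreq
  rw [not_eventually] at hfreq
  obtain ⟨a, ha1, hma, hgood⟩ := exists_Ico_of_frequently_of_eventually_nhdsLT hfreq
    (hu.and (hpos.and (hQ0.and (hQm.and hem))))
  have hN : ∀ φ ∈ Ico a 1, u φ ≤ m → u φ + Q φ / u φ - e φ ≤ -δ := fun φ hφ hmφ =>
    let ⟨_, hpos, hQ0, hQm, hem⟩ := hgood φ hφ
    add_div_sub_le hlam' hm hpos hmφ hQ0 hQm hem
  have hstay : ∀ φ ∈ Ico a 1, u φ ≤ m :=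
    le_of_hasDerivAt_neg_of_eq (fun φ hφ => (hgood φ hφ).1)
      (fun φ hφ hmφ => div_neg_of_neg_of_pos (by linarith [hN φ hφ hmφ.le]) (sub_pos.2 hφ.2))
      (not_lt.1 hma)
  have hmono : MonotoneOn (fun φ => δ * Real.log (1 - φ) - u φ) (Ico a 1) := by
    refine monotoneOn_Ico_of_hasDerivAt_nonneg
      (fun φ hφ => ((hasDerivAt_log_one_sub hφ.2).const_mul δ).sub (hgood φ hφ).1)
      (fun φ hφ => ?_)
    rw [mul_div_assoc', ← sub_div]
    exact div_nonneg (by linarith [hN φ hφ (hstay φ hφ)]) (sub_pos.2 hφ.2).le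
  have hbound : ∀ φ ∈ Ico a 1, u φ ≤ δ * Real.log (1 - φ) - (δ * Real.log (1 - a) - u a) :=
    fun φ hφ => by linarith [hmono ⟨le_rfl, ha1⟩ hφ hφ.1]
  have hlim : Tendsto (fun φ => δ * Real.log (1 - φ) - (δ * Real.log (1 - a) - u a)) (𝓝[<] 1)
      atBot :=
    tendsto_atBot_add_const_right _ _
      ((Real.tendsto_log_nhdsGT_zero.comp tendsto_one_sub_nhdsLT_one).const_mul_atBot
        (by linarith))
  obtain ⟨φ, hφneg, hφpos, hφ⟩ :=
    ((hlim.eventually_lt_atBot 0).and (hpos.and (Ioo_mem_nhdsLT ha1))).exists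
  linarith [hbound φ ⟨hφ.1.le, hφ.2⟩]

lemma tendsto_of_hasDerivAt_singular {u Q e : ℝ → ℝ} {b q : ℝ} (hq : q ≤ 0)
    (hu : ∀ᶠ φ in 𝓝[<] 1, HasDerivAt u ((u φ + Q φ / u φ - e φ) / (1 - φ)) φ)
    (hpos : ∀ᶠ φ in 𝓝[<] 1, 0 < u φ) (hQ0 : ∀ᶠ φ in 𝓝[<] 1, Q φ ≤ 0)
    (hQ : Tendsto Q (𝓝[<] 1) (𝓝 q)) (he : Tendsto e (𝓝[<] 1) (𝓝 b))
    (hdecay : Tendsto (fun φ => u φ * (1 - φ)) (𝓝[<] 1) (𝓝 0)) :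
    Tendsto u (𝓝[<] 1) (𝓝 ((b + √(b ^ 2 - 4 * q)) / 2)) := by
  set D := √(b ^ 2 - 4 * q)
  have hbD : |b| ≤ D := Real.abs_le_sqrt (by linarith)
  have hD2 : D ^ 2 = b ^ 2 - 4 * q := Real.sq_sqrt (by nlinarith)
  have hsum : (b + D) / 2 + (b - D) / 2 = b := by ring
  have hprod : (b + D) / 2 * ((b - D) / 2) = q := by nlinarith
  rw [← hsum] at he
  rw [← hprod] at hQ
  have hlam : 0 ≤ (b + D) / 2 := by linarith [neg_abs_le b]
  have hlam' : (b - D) / 2 ≤ 0 := by linarith [le_abs_self b]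
  exact tendsto_order.2
    ⟨fun m hm => eventually_gt_of_hasDerivAt_singular hlam' hu hpos hQ0 hQ he hm,
      fun m hm => eventually_lt_of_hasDerivAt_singular hlam hlam' hu hQ he hdecay hm⟩

lemma tendsto_nhdsLT_one_of_continuousOn {g : ℝ → ℝ} (hg : ContinuousOn g (Icc 0 1)) :
    Tendsto g (𝓝[<] 1) (𝓝 (g 1)) :=
  (hg 1 ⟨zero_le_one, le_rfl⟩).mono_of_mem_nhdsWithin (Icc_mem_nhdsLT zero_lt_one)

lemma hasDerivAt_div_sub_one {z : ℝ → ℝ} {φ q e : ℝ} (hz : HasDerivAt z (e - q / z φ) φ)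
    (hzφ : z φ ≠ 0) (hφ : φ ≠ 1) :
    HasDerivAt (fun x => z x / (x - 1))
      ((z φ / (φ - 1) + q / (φ - 1) / (z φ / (φ - 1)) - e) / (1 - φ)) φ := by
  have hφ1 : φ - 1 ≠ 0 := sub_ne_zero.2 hφ
  have h1φ : 1 - φ ≠ 0 := sub_ne_zero.2 hφ.symm
  refine (hz.div ((hasDerivAt_id' φ).sub_const 1) hφ1).congr_deriv ?_
  field_simp
  ring

lemma tendsto_slope_one_of_ne_zero {h q z : ℝ → ℝ} {c : ℝ} (hz : SolODE h q c z)
    (hh : Tendsto h (𝓝[<] 1) (𝓝 (h 1))) (hq : Tendsto q (𝓝[<] 1) (𝓝 0)) (hz1 : z 1 ≠ 0) :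
    Tendsto (fun φ => (z φ - z 1) / (φ - 1)) (𝓝[<] 1) (𝓝 (h 1 - c)) := by
  obtain ⟨hz_cont, hz_deriv, -⟩ := hz
  have hIoo : Ioo (0 : ℝ) 1 ∈ 𝓝[<] 1 := Ioo_mem_nhdsLT zero_lt_one
  have hderiv : Tendsto (deriv z) (𝓝[<] 1) (𝓝 (h 1 - c)) := by
    have := (hh.sub_const c).sub (hq.div (tendsto_nhdsLT_one_of_continuousOn hz_cont) hz1)
    rw [zero_div, sub_zero] at this
    refine this.congr' ?_
    filter_upwards [hIoo] with φ hφ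
    exact (hz_deriv φ hφ).deriv.symm
  have hz' := hasDerivWithinAt_Iic_of_tendsto_deriv
    (fun φ hφ => (hz_deriv φ hφ).differentiableAt.differentiableWithinAt)
    ((hz_cont 1 ⟨zero_le_one, le_rfl⟩).mono Ioo_subset_Icc_self) hIoo hderiv
  refine ((hasDerivWithinAt_iff_tendsto_slope' self_notMem_Iio).1
    (hz'.mono Iio_subset_Iic_self)).congr fun φ => ?_
  rw [slope_def_field]

lemma tendsto_slope_one_of_eq_zero {h q z : ℝ → ℝ} {c q1' : ℝ} (hz : SolODE h q c z)
    (hq_pos : ∀ φ ∈ Ioo (0 : ℝ) 1, 0 < q φ) (hh : Tendsto h (𝓝[<] 1) (𝓝 (h 1)))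
    (hq1'le : q1' ≤ 0) (hq1'lim : Tendsto (fun φ => q φ / (φ - 1)) (𝓝[<] (1 : ℝ)) (𝓝 q1'))
    (hz1 : z 1 = 0) :
    Tendsto (fun φ => (z φ - z 1) / (φ - 1)) (𝓝[<] 1)
      (𝓝 ((h 1 - c + √((h 1 - c) ^ 2 - 4 * q1')) / 2)) := by
  obtain ⟨hz_cont, hz_deriv, hz_neg⟩ := hz
  have hIoo : ∀ᶠ φ in 𝓝[<] (1 : ℝ), φ ∈ Ioo 0 1 := Ioo_mem_nhdsLT zero_lt_one
  simp only [hz1, sub_zero]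
  refine tendsto_of_hasDerivAt_singular hq1'le ?_ ?_ ?_ hq1'lim (hh.sub_const c) ?_
  · filter_upwards [hIoo] with φ hφ
    exact hasDerivAt_div_sub_one (hz_deriv φ hφ) (hz_neg φ hφ).ne hφ.2.ne
  · filter_upwards [hIoo] with φ hφ
    exact div_pos_of_neg_of_neg (hz_neg φ hφ) (sub_neg.2 hφ.2)
  · filter_upwards [hIoo] with φ hφ
    exact (div_neg_of_pos_of_neg (hq_pos φ hφ) (sub_neg.2 hφ.2)).le
  · have := (tendsto_nhdsLT_one_of_continuousOn hz_cont).neg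
    rw [hz1, neg_zero] at this
    refine this.congr' ?_
    filter_upwards [hIoo] with φ hφ
    have : φ - 1 ≠ 0 := (sub_neg.2 hφ.2).ne
    field_simp
    ring

theorem stmt_16_general (h q z : ℝ → ℝ) (c q1' : ℝ)
    (hq_cont : ContinuousOn q (Icc 0 1))
    (hq_pos : ∀ φ ∈ Ioo (0:ℝ) 1, 0 < q φ)
    (hq1 : q 1 = 0)
    (hh_cont : ContinuousOn h (Icc 0 1))
    (hq1'le : q1' ≤ 0)
    (hq1'lim : Tendsto (fun φ => q φ / (φ - 1)) (𝓝[<] (1:ℝ)) (𝓝 q1'))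
    (hz : PC h q c z) :
    ∃ zd1 : ℝ,
      Tendsto (fun φ => (z φ - z 1) / (φ - 1)) (𝓝[<] (1:ℝ)) (𝓝 zd1) ∧
      (z 1 < 0 → zd1 = h 1 - c) ∧
      (z 1 = 0 →
        (q1' < 0 → zd1 = (h 1 - c + Real.sqrt ((h 1 - c) ^ 2 - 4 * q1')) / 2) ∧
        (q1' = 0 → zd1 = max 0 (h 1 - c))) := by
  have hh := tendsto_nhdsLT_one_of_continuousOn hh_cont
  have hq : Tendsto q (𝓝[<] 1) (𝓝 0) := hq1 ▸ tendsto_nhdsLT_one_of_continuousOn hq_cont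
  have hz1 : z 1 ≤ 0 := by
    refine le_of_tendsto (tendsto_nhdsLT_one_of_continuousOn hz.1.1) ?_
    filter_upwards [Ioo_mem_nhdsLT zero_lt_one] with φ hφ
    exact (hz.1.2.2 φ hφ).le
  rcases hz1.lt_or_eq with hz1 | hz1
  · exact ⟨h 1 - c, tendsto_slope_one_of_ne_zero hz.1 hh hq hz1.ne, fun _ => rfl,
      fun h0 => absurd h0 hz1.ne⟩
  refine ⟨_, tendsto_slope_one_of_eq_zero hz.1 hq_pos hh hq1'le hq1'lim hz1,
    fun h0 => absurd hz1 h0.ne, fun _ => ⟨fun _ => rfl, fun h0 => ?_⟩⟩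
  rw [h0, mul_zero, sub_zero, Real.sqrt_sq_eq_abs]
  rcases le_total 0 (h 1 - c) with hb | hb
  · rw [abs_of_nonneg hb, max_eq_right hb]; ring
  · rw [abs_of_nonpos hb, max_eq_left hb]; ring

/-- existence and value of the one-sided derivative ż(1) of a
solution of (P_c), c ≥ c*, when q̇(1) exists in (−∞,0]. -/
theorem stmt_16 (f h q z : ℝ → ℝ) (cstar c q1' : ℝ)
    (hq_cont : ContinuousOn q (Icc 0 1))
    (hq_pos : ∀ φ ∈ Ioo (0:ℝ) 1, 0 < q φ)
    (hq0 : q 0 = 0) (hq1 : q 1 = 0)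
    (hq_lim : ∃ L : ℝ, ∀ᶠ φ in 𝓝[>] (0:ℝ), q φ / φ ≤ L)
    (hf0 : f 0 = 0)
    (hf' : ∀ x ∈ Icc (0:ℝ) 1, HasDerivWithinAt f (h x) (Icc 0 1) x)
    (hh_cont : ContinuousOn h (Icc 0 1))
    (hq1'le : q1' ≤ 0)
    (hq1'lim : Tendsto (fun φ => q φ / (φ - 1)) (𝓝[<] (1:ℝ)) (𝓝 q1'))
    (hcstar : ∀ c' : ℝ, (∃ w : ℝ → ℝ, PC00 h q c' w) ↔ cstar ≤ c')
    (hc : cstar ≤ c)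
    (hz : PC h q c z) :
    ∃ zd1 : ℝ,
      Tendsto (fun φ => (z φ - z 1) / (φ - 1)) (𝓝[<] (1:ℝ)) (𝓝 zd1) ∧
      (z 1 < 0 → zd1 = h 1 - c) ∧
      (z 1 = 0 →
        (q1' < 0 → zd1 = (h 1 - c + Real.sqrt ((h 1 - c) ^ 2 - 4 * q1')) / 2) ∧
        (q1' = 0 → zd1 = max 0 (h 1 - c))) :=
  stmt_16_general h q z c q1' hq_cont hq_pos hq1 hh_cont hq1'le hq1'lim hz
end
end

section
/- Assume (q), let f ∈ C¹[0,1] with f(0)=0, h := f′, let c* be the threshold for problem (P_c⁰⁰), let z* be the solution of (P_{c*}⁰⁰), fix c > c*, and let z_β be the solution of (P_c) with z_β(1) = β(c) (the minimal admissible right-hand value). For every φ₀ ∈ (0,1) there is a unique ẑ_{φ₀} ∈ C[0,1] ∩ C¹(0,1) satisfying ẑ̇_{φ₀}(φ) = h(φ) − c − q(φ)/ẑ_{φ₀}(φ) on (0,1) and ẑ_{φ₀}(φ₀) = z*(φ₀); it satisfies ẑ_{φ₀}(0) = 0, ẑ_{φ₀} < z* on (φ₀, 1], and ẑ_{φ₀}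 ≥ z_β on (0,1]. Moreover, if 0 < φ₁ < φ₀ then ẑ_{φ₁} < ẑ_{φ₀} on (0,1]. -/
open Set Filter Topology MeasureTheory

noncomputable section

/-- Solution of the auxiliary problem \eqref{first order problem hat}: the ODE on (0,1),
continuous on [0,1], with initial value z*(φ₀) at φ₀. -/
def HatSol (h q : ℝ → ℝ) (c φ₀ : ℝ) (zstar zhat : ℝ → ℝ) : Prop :=
  ContinuousOn zhat (Icc 0 1) ∧
  (∀ φ ∈ Ioo (0:ℝ) 1, HasDerivAt zhat (h φ - c - q φ / zhat φ) φ) ∧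
  zhat φ₀ = zstar φ₀

/-!
Two distinct negative solutions of `z' = h - c - q / z` with the same speed never meet, by Lipschitz
uniqueness away from `z = 0`, and their gap `z₂ - z₁` has derivative `q (z₂ - z₁) / (z₁ z₂)`, so it
grows with `t`. Where a solution of speed `c` meets one of speed `c* < c`, their gap has derivative
`c* - c < 0`, so the first crosses the second downwards. A solution cannot vanish at an interior
point `α` while being negative on one side of it: being differentiable at `α` it is `O(t - α)`,
so `- q / z` blows up and pushes it up too steeply.

The solutions of (P_c) with `z(1) = b ∈ [β(c), 0)` are ordered in `b`, with gaps at `φ₀` at most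
the gaps at `1`. At `b = β(c)` the value at `φ₀` is at most `z*(φ₀)`; for `b` near `0` it is above
`z*(φ₀)`, because the solution of (P_c⁰⁰) lies above `z*`. The intermediate value theorem in `b`
gives `ẑ_{φ₀}`. The inequality `z_β ≤ z*` holds because otherwise the solution through
`(σ, z*(σ))`, built by Picard–Lindelöf below the barrier `z_β` on each `[a, 1]` and glued as
`a → 0`, would be squeezed between `z*` and `0` near `0` and end below `β(c)`.
-/

lemma mul_sub_le_sub_of_hasDerivAt {f f' : ℝ → ℝ} {a b C : ℝ} (hab : a ≤ b)
    (hf : ContinuousOn f (Icc a b)) (hf' : ∀ x ∈ Ioo a b, HasDerivAt f (f' x) x)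
    (hC : ∀ x ∈ Ioo a b, C ≤ f' x) : C * (b - a) ≤ f b - f a := by
  refine (convex_Icc a b).mul_sub_le_image_sub_of_le_deriv hf ?_ ?_ a ⟨le_rfl, hab⟩ b
    ⟨hab, le_rfl⟩ hab <;> rw [interior_Icc]
  · exact fun x hx => (hf' x hx).differentiableAt.differentiableWithinAt
  · exact fun x hx => (hf' x hx).deriv ▸ hC x hx

lemma exists_first_zero {f : ℝ → ℝ} {a b : ℝ} (hab : a ≤ b) (hf : ContinuousOn f (Icc a b))
    (ha : f a < 0) (hb : 0 ≤ f b) : ∃ α ∈ Ioc a b, f α = 0 ∧ ∀ t ∈ Ico a α, f t < 0 := by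
  set S := Icc a b ∩ f ⁻¹' Ici 0
  have hS : IsClosed S := hf.preimage_isClosed_of_isClosed isClosed_Icc isClosed_Ici
  have hbS : b ∈ S := ⟨⟨hab, le_rfl⟩, hb⟩
  have hSa : BddBelow S := ⟨a, fun t ht => ht.1.1⟩
  have hαS : sInf S ∈ S := hS.csInf_mem ⟨b, hbS⟩ hSa
  have hbelow : ∀ t ∈ Ico a (sInf S), f t < 0 := fun t ht =>
    not_le.1 fun h0 => ht.2.not_ge (csInf_le hSa ⟨⟨ht.1, ht.2.le.trans hαS.1.2⟩, h0⟩)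
  have haα : a < sInf S := hαS.1.1.lt_of_ne fun h => (hαS.2.trans_lt (h ▸ ha)).false
  refine ⟨sInf S, ⟨haα, hαS.1.2⟩, le_antisymm ?_ hαS.2, hbelow⟩
  by_contra! hpos
  obtain ⟨ρ, hρ, hρ0⟩ := intermediate_value_Icc haα.le (hf.mono (Icc_subset_Icc le_rfl hαS.1.2))
    ⟨ha.le, hpos.le⟩
  rcases hρ.2.lt_or_eq with hρα | rfl
  · exact (hbelow ρ ⟨hρ.1, hρα⟩).ne hρ0
  · exact hpos.ne' hρ0

lemma exists_last_zero {f : ℝ → ℝ} {a b : ℝ} (hab : a ≤ b) (hf : ContinuousOn f (Icc a b))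
    (ha : 0 ≤ f a) (hb : f b < 0) : ∃ α ∈ Ico a b, f α = 0 ∧ ∀ t ∈ Ioc α b, f t < 0 := by
  obtain ⟨α, hα, hα0, hneg⟩ := exists_first_zero (f := fun t => f (-t)) (neg_le_neg hab)
    (hf.comp continuousOn_neg fun t ht => ⟨by linarith [ht.2], by linarith [ht.1]⟩)
    (by simpa using hb) (by simpa using ha)
  refine ⟨-α, ⟨by linarith [hα.2], by linarith [hα.1]⟩, hα0, fun t ht => ?_⟩
  simpa using hneg (-t) ⟨neg_le_neg ht.2, by linarith [ht.1]⟩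

lemma IsPreconnected.neg_of_forall_ne_zero {α : Type*} [TopologicalSpace α] {s : Set α}
    {f : α → ℝ} (hs : IsPreconnected s) (hf : ContinuousOn f s) (hne : ∀ t ∈ s, f t ≠ 0)
    {t₀ : α} (ht₀ : t₀ ∈ s) (h₀ : f t₀ < 0) : ∀ t ∈ s, f t < 0 := fun t ht =>
  not_le.1 fun h => by
    obtain ⟨τ, hτ, hτ0⟩ := hs.intermediate_value ht₀ ht hf ⟨h₀.le, h⟩
    exact hne τ hτ hτ0

lemma IsCompact.exists_pos_forall_le_neg {K : Set ℝ} {u : ℝ → ℝ} (hK : IsCompact K)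
    (hu : ContinuousOn u K) (hneg : ∀ t ∈ K, u t < 0) : ∃ ρ > 0, ∀ t ∈ K, u t ≤ -ρ := by
  rcases K.eq_empty_or_nonempty with rfl | hne
  · exact ⟨1, one_pos, fun t ht => ht.elim⟩
  obtain ⟨tm, htm, hmax⟩ := hK.exists_isMaxOn hne hu
  exact ⟨-u tm, by linarith [hneg tm htm], fun t ht => by linarith [isMaxOn_iff.1 hmax t ht]⟩

lemma continuousOn_Icc_of_squeeze {Z g : ℝ → ℝ} {ε : ℝ} (hε : 0 < ε)
    (hZ : ContinuousOn Z (Ioc 0 1)) (hZ0 : Z 0 = 0) (hg : ContinuousWithinAt g (Icc 0 1) 0)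
    (hg0 : g 0 = 0) (hgZ : ∀ t ∈ Ioo 0 ε, g t ≤ Z t ∧ Z t ≤ 0) : ContinuousOn Z (Icc 0 1) := by
  rw [← Ioc_insert_left zero_le_one]
  refine fun t ht => ContinuousWithinAt.insert' ?_
  rcases ht with rfl | ht
  · have hev : ∀ᶠ s in 𝓝[Ioc 0 1] 0, g s ≤ Z s ∧ Z s ≤ 0 := by
      filter_upwards [self_mem_nhdsWithin, nhdsWithin_le_nhds (Iio_mem_nhds hε)] with s hs hsε
      exact hgZ s ⟨hs.1, hsε⟩
    rw [ContinuousWithinAt, hg0] at hg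
    rw [ContinuousWithinAt, hZ0]
    exact tendsto_of_tendsto_of_tendsto_of_le_of_le'
      (hg.mono_left (nhdsWithin_mono _ Ioc_subset_Icc_self)) tendsto_const_nhds
      (hev.mono fun _ hs => hs.1) (hev.mono fun _ hs => hs.2)
  · exact hZ t ht

lemma lipschitzOnWith_sub_div {r p Q ρ : ℝ} (hρ : 0 < ρ) (hp : |p| ≤ Q) :
    LipschitzOnWith (Q / ρ ^ 2).toNNReal (fun x => r - p / x) (Iic (-ρ)) := by
  refine LipschitzOnWith.of_dist_le_mul fun x (hx : x ≤ -ρ) y (hy : y ≤ -ρ) => ?_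
  have hQ : 0 ≤ Q := (abs_nonneg p).trans hp
  have hxy : ρ ^ 2 ≤ |x * y| := by rw [abs_of_pos (by nlinarith)]; nlinarith
  rw [Real.coe_toNNReal _ (by positivity), Real.dist_eq, Real.dist_eq]
  have hx0 : x ≠ 0 := by linarith
  have hy0 : y ≠ 0 := by linarith
  calc |r - p / x - (r - p / y)| = |p| * |x - y| / |x * y| := by
        rw [← abs_mul, ← abs_div]; congr 1; field_simp; ring
    _ ≤ Q * |x - y| / ρ ^ 2 := by gcongr
    _ = Q / ρ ^ 2 * |x - y| := by ring

lemma lipschitzWith_sub_div_min_s17 {r p m Q ρ : ℝ} (hρ : 0 < ρ) (hm : m ≤ -ρ) (hp : |p| ≤ Q) :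
    LipschitzWith (Q / ρ ^ 2).toNNReal (fun x => r - p / min x m) := by
  have := (lipschitzOnWith_sub_div (r := r) hρ hp).comp
    (LipschitzWith.id.min_const m).lipschitzOnWith
    (fun x _ => (min_le_right x m).trans hm : MapsTo _ univ (Iic (-ρ)))
  rw [mul_one] at this
  exact lipschitzOnWith_univ.1 this

namespace SingularODE

def SolvesOn (h q : ℝ → ℝ) (c : ℝ) (z : ℝ → ℝ) (s : Set ℝ) : Prop :=
  ∀ t ∈ s, HasDerivAt z (h t - c - q t / z t) t

/-- `SolODE h q c z` is definitionally `IsNegSolOn h q c z 0 1`. -/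
def IsNegSolOn (h q : ℝ → ℝ) (c : ℝ) (z : ℝ → ℝ) (a b : ℝ) : Prop :=
  ContinuousOn z (Icc a b) ∧ SolvesOn h q c z (Ioo a b) ∧ ∀ t ∈ Ioo a b, z t < 0

variable {h q : ℝ → ℝ}

lemma hasDerivAt_sub_of_hasDerivAt {z₁ z₂ : ℝ → ℝ} {c₁ c₂ t : ℝ}
    (h₁ : HasDerivAt z₁ (h t - c₁ - q t / z₁ t) t) (h₂ : HasDerivAt z₂ (h t - c₂ - q t / z₂ t) t)
    (hz₁ : z₁ t ≠ 0) (hz₂ : z₂ t ≠ 0) :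
    HasDerivAt (fun s => z₁ s - z₂ s) (c₂ - c₁ + q t * (z₁ t - z₂ t) / (z₁ t * z₂ t)) t := by
  refine (h₁.sub h₂).congr_deriv ?_
  field_simp
  ring

lemma IsNegSolOn.mono {c a b a' b' : ℝ} {z : ℝ → ℝ} (hz : IsNegSolOn h q c z a b)
    (ha : a ≤ a') (hb : b' ≤ b) : IsNegSolOn h q c z a' b' :=
  ⟨hz.1.mono (Icc_subset_Icc ha hb), fun t ht => hz.2.1 t (Ioo_subset_Ioo ha hb ht),
    fun t ht => hz.2.2 t (Ioo_subset_Ioo ha hb ht)⟩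

lemma eventuallyEq_of_hasDerivAt {c t₀ : ℝ} {z₁ z₂ : ℝ → ℝ} (hq : ContinuousAt q t₀)
    (h₁ : ∀ᶠ t in 𝓝 t₀, HasDerivAt z₁ (h t - c - q t / z₁ t) t)
    (h₂ : ∀ᶠ t in 𝓝 t₀, HasDerivAt z₂ (h t - c - q t / z₂ t) t)
    (hneg : z₁ t₀ < 0) (heq : z₁ t₀ = z₂ t₀) : z₁ =ᶠ[𝓝 t₀] z₂ := by
  obtain ⟨ρ, hρ, hρz⟩ : ∃ ρ > 0, z₁ t₀ < -ρ := ⟨-z₁ t₀ / 2, by linarith, by linarith⟩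
  have hlt : ∀ z : ℝ → ℝ, ContinuousAt z t₀ → z t₀ = z₁ t₀ → ∀ᶠ t in 𝓝 t₀, z t ≤ -ρ :=
    fun z hz hz₀ => hz.eventually (Iic_mem_nhds (hz₀ ▸ hρz))
  have hQ : ∀ᶠ t in 𝓝 t₀, |q t| ≤ |q t₀| + 1 :=
    hq.abs.eventually (Iic_mem_nhds (lt_add_one _))
  refine ODE_solution_unique_of_eventually (K := ((|q t₀| + 1) / ρ ^ 2).toNNReal)
    (v := fun t x => h t - c - q t / x) (s := fun _ => Iic (-ρ)) ?_ ?_ ?_ heq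
  · exact hQ.mono fun t ht => lipschitzOnWith_sub_div hρ ht
  · exact h₁.and (hlt z₁ h₁.self_of_nhds.continuousAt rfl)
  · exact h₂.and (hlt z₂ h₂.self_of_nhds.continuousAt heq.symm)

lemma SolvesOn.eqOn {c t₀ : ℝ} {s : Set ℝ} {z₁ z₂ : ℝ → ℝ} (hs : IsOpen s)
    (hs' : IsPreconnected s) (hq : ContinuousOn q s) (h₁ : SolvesOn h q c z₁ s)
    (h₂ : SolvesOn h q c z₂ s) (hneg : ∀ t ∈ s, z₁ t < 0) (ht₀ : t₀ ∈ s)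
    (heq : z₁ t₀ = z₂ t₀) : EqOn z₁ z₂ s := by
  have hloc : ∀ t ∈ s, z₁ t = z₂ t → z₁ =ᶠ[𝓝 t] z₂ := fun t ht he =>
    eventuallyEq_of_hasDerivAt (hq.continuousAt (hs.mem_nhds ht))
      (eventually_of_mem (hs.mem_nhds ht) h₁) (eventually_of_mem (hs.mem_nhds ht) h₂)
      (hneg t ht) he
  -- `U` is open, and closed in `s` by continuity and local uniqueness
  set U := s ∩ {t | z₁ =ᶠ[𝓝 t] z₂}
  have hU : s ⊆ U := by
    refine hs'.subset_of_closure_inter_subset (hs.inter isOpen_setOfPred_eventually_nhds)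
      ⟨t₀, ht₀, ht₀, hloc t₀ ht₀ heq⟩ fun t ⟨htU, hts⟩ => ⟨hts, hloc t hts ?_⟩
    have hcont : ∀ z : ℝ → ℝ, SolvesOn h q c z s → ContinuousOn z (insert t U) :=
      fun z hz => HasDerivAt.continuousOn fun τ hτ =>
        hz τ (by rcases hτ with rfl | hτ; exacts [hts, hτ.1])
    exact EqOn.of_subset_closure (fun τ hτ => hτ.2.self_of_nhds) (hcont z₁ h₁) (hcont z₂ h₂)
      (subset_insert t U) (insert_subset htU subset_closure) (mem_insert t U)
  exact fun t ht => (hU ht).2.self_of_nhds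

section SameSpeed

variable {c a b : ℝ} {z₁ z₂ : ℝ → ℝ}

lemma IsNegSolOn.monotoneOn_sub (hq : ∀ t ∈ Ioo a b, 0 ≤ q t) (h₁ : IsNegSolOn h q c z₁ a b)
    (h₂ : IsNegSolOn h q c z₂ a b) (hle : ∀ t ∈ Ioo a b, z₁ t ≤ z₂ t) :
    MonotoneOn (fun t => z₂ t - z₁ t) (Icc a b) := by
  refine monotoneOn_of_hasDerivWithinAt_nonneg (convex_Icc a b) (h₂.1.sub h₁.1)
    (f' := fun t => c - c + q t * (z₂ t - z₁ t) / (z₂ t * z₁ t)) ?_ ?_ <;> rw [interior_Icc]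
  · exact fun t ht => (hasDerivAt_sub_of_hasDerivAt (h₂.2.1 t ht) (h₁.2.1 t ht)
      (h₂.2.2 t ht).ne (h₁.2.2 t ht).ne).hasDerivWithinAt
  · intro t ht
    rw [sub_self, zero_add]
    exact div_nonneg (mul_nonneg (hq t ht) (sub_nonneg.2 (hle t ht)))
      (mul_pos_of_neg_of_neg (h₂.2.2 t ht) (h₁.2.2 t ht)).le

lemma IsNegSolOn.eqOn (hq : ContinuousOn q (Ioo a b)) (h₁ : IsNegSolOn h q c z₁ a b)
    (h₂ : IsNegSolOn h q c z₂ a b) {t₀ : ℝ} (ht₀ : t₀ ∈ Ioo a b) (heq : z₁ t₀ = z₂ t₀) :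
    EqOn z₁ z₂ (Icc a b) := by
  refine (SolvesOn.eqOn isOpen_Ioo isPreconnected_Ioo hq h₁.2.1 h₂.2.1 h₁.2.2 ht₀
    heq).of_subset_closure h₁.1 h₂.1 Ioo_subset_Icc_self ?_
  rw [closure_Ioo (ht₀.1.trans ht₀.2).ne]

variable (hq : ContinuousOn q (Ioo a b)) (hq₀ : ∀ t ∈ Ioo a b, 0 ≤ q t)
include hq hq₀

lemma IsNegSolOn.lt_of_lt (h₁ : IsNegSolOn h q c z₁ a b) (h₂ : IsNegSolOn h q c z₂ a b)
    {t₀ : ℝ} (ht₀ : t₀ ∈ Ioo a b) (hlt : z₁ t₀ < z₂ t₀) : ∀ t ∈ Ioc a b, z₁ t < z₂ t := by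
  have hIoo : ∀ t ∈ Ioo a b, z₁ t - z₂ t < 0 :=
    isPreconnected_Ioo.neg_of_forall_ne_zero ((h₁.1.sub h₂.1).mono Ioo_subset_Icc_self)
      (fun t ht h0 => hlt.ne (SolvesOn.eqOn isOpen_Ioo isPreconnected_Ioo hq h₁.2.1 h₂.2.1
        h₁.2.2 ht (sub_eq_zero.1 h0) ht₀)) ht₀ (sub_neg.2 hlt)
  intro t ht
  rcases ht.2.lt_or_eq with htb | rfl
  · exact sub_neg.1 (hIoo t ⟨ht.1, htb⟩)
  · have := h₁.monotoneOn_sub hq₀ h₂ (fun t ht => (sub_neg.1 (hIoo t ht)).le)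
      ⟨ht₀.1.le, ht₀.2.le⟩ ⟨ht.1.le, le_rfl⟩ ht₀.2.le
    simp only at this
    linarith

lemma IsNegSolOn.le_of_le (h₁ : IsNegSolOn h q c z₁ a b) (h₂ : IsNegSolOn h q c z₂ a b)
    (hle : z₁ b ≤ z₂ b) : ∀ t ∈ Ioo a b, z₁ t ≤ z₂ t ∧ z₂ t - z₁ t ≤ z₂ b - z₁ b := by
  have hord : ∀ t ∈ Ioo a b, z₁ t ≤ z₂ t := fun t ht => not_lt.1 fun hlt =>
    (h₂.lt_of_lt hq hq₀ h₁ ht hlt b ⟨ht.1.trans ht.2, le_rfl⟩).not_ge hle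
  exact fun t ht => ⟨hord t ht, h₁.monotoneOn_sub hq₀ h₂ hord ⟨ht.1.le, ht.2.le⟩
    ⟨(ht.1.trans ht.2).le, le_rfl⟩ ht.2.le⟩

end SameSpeed

section DifferentSpeeds

variable {c₁ c₂ a b s : ℝ} {z₁ z₂ : ℝ → ℝ}

lemma IsNegSolOn.lt_of_le_of_speed_lt (hc : c₂ < c₁) (hq : ∀ t ∈ Ioo a b, 0 ≤ q t)
    (h₁ : IsNegSolOn h q c₁ z₁ a b) (h₂ : IsNegSolOn h q c₂ z₂ a b) (hs : s ∈ Ioo a b)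
    (hle : z₁ s ≤ z₂ s) : ∀ t ∈ Ioc s b, z₁ t < z₂ t := by
  have hsub : Ico s b ⊆ Ioo a b := fun t ht => ⟨hs.1.trans_le ht.1, ht.2⟩
  -- the gap `z₁ - z₂` stays below the line through `(s, 0)` of slope `(c₂ - c₁) / 2`
  have key := image_le_of_deriv_right_lt_deriv_boundary' (a := s) (b := b)
    (f := fun t => z₁ t - z₂ t)
    (f' := fun t => c₂ - c₁ + q t * (z₁ t - z₂ t) / (z₁ t * z₂ t))
    (B := fun t => (c₂ - c₁) / 2 * (t - s)) (B' := fun _ => (c₂ - c₁) / 2)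
    ((h₁.1.sub h₂.1).mono (Icc_subset_Icc hs.1.le le_rfl))
    (fun t ht => (hasDerivAt_sub_of_hasDerivAt (h₁.2.1 t (hsub ht)) (h₂.2.1 t (hsub ht))
      (h₁.2.2 t (hsub ht)).ne (h₂.2.2 t (hsub ht)).ne).hasDerivWithinAt)
    (by simpa using hle) (by fun_prop)
    (fun t _ => (((hasDerivAt_id t).sub_const s).const_mul _).hasDerivWithinAt.congr_deriv
      (by ring))
    (fun t ht heq => by
      have hB : (c₂ - c₁) / 2 * (t - s) ≤ 0 :=
        mul_nonpos_of_nonpos_of_nonneg (by linarith) (by linarith [ht.1])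
      have hQ : q t * (z₁ t - z₂ t) / (z₁ t * z₂ t) ≤ 0 :=
        div_nonpos_of_nonpos_of_nonneg
          (mul_nonpos_of_nonneg_of_nonpos (hq t (hsub ht)) (by linarith))
          (mul_pos_of_neg_of_neg (h₁.2.2 t (hsub ht)) (h₂.2.2 t (hsub ht))).le
      linarith)
  intro t ht
  have hB : (c₂ - c₁) / 2 * (t - s) < 0 := mul_neg_of_neg_of_pos (by linarith) (by linarith [ht.1])
  linarith [key ⟨ht.1.le, ht.2⟩]

lemma IsNegSolOn.lt_of_ge_of_speed_lt (hc : c₂ < c₁) (hq : ∀ t ∈ Ioo a b, 0 ≤ q t)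
    (h₁ : IsNegSolOn h q c₁ z₁ a b) (h₂ : IsNegSolOn h q c₂ z₂ a b) (hs : s ∈ Ioc a b)
    (hle : z₂ s ≤ z₁ s) : ∀ t ∈ Ioo a s, z₂ t < z₁ t := by
  intro t ht
  by_contra! hge
  exact (h₁.lt_of_le_of_speed_lt hc hq h₂ ⟨ht.1, ht.2.trans_le hs.2⟩ hge s ⟨ht.2, hs.2⟩).not_ge hle

end DifferentSpeeds

section Zeros

variable {c α : ℝ} {z : ℝ → ℝ} (hh : ContinuousAt h α) (hq : ContinuousAt q α) (hqα : 0 < q α)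
  (hd : ∀ᶠ t in 𝓝 α, HasDerivAt z (h t - c - q t / z t) t) (hz : z α = 0)
include hh hq hqα hd hz

/-- Near a zero `α`, `z` is `O(t - α)` since it is differentiable at `α`, so `- q / z` blows up
and `z` increases steeply wherever it is negative. -/
lemma exists_abs_le_and_le_deriv_of_eq_zero :
    ∃ K > 0, ∀ᶠ t in 𝓝 α, |z t| ≤ K * |t - α| ∧ (z t < 0 → 2 * K ≤ h t - c - q t / z t) := by
  obtain ⟨d, hdα⟩ : ∃ d, HasDerivAt z d α := ⟨_, hd.self_of_nhds⟩
  set K := |d| + |h α - c| + 1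
  have hK : 0 < K := by positivity
  have hlin : ∀ᶠ t in 𝓝 α, |z t| ≤ K * |t - α| := by
    filter_upwards [hdα.isLittleO.def one_pos] with t ht
    rw [hz, sub_zero, smul_eq_mul, Real.norm_eq_abs, Real.norm_eq_abs] at ht
    have := abs_sub_abs_le_abs_sub (z t) ((t - α) * d)
    rw [abs_mul] at this
    nlinarith [abs_nonneg (t - α), abs_nonneg d, abs_nonneg (h α - c)]
  have hhK : ∀ᶠ t in 𝓝 α, |h t - c| < K := by
    have : ContinuousAt (fun t => |h t - c|) α := (hh.sub continuousAt_const).abs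
    exact this.eventually (Iio_mem_nhds (by simp only [K]; linarith [abs_nonneg d]))
  have hqα2 : ∀ᶠ t in 𝓝 α, q α / 2 < q t := hq.eventually (Ioi_mem_nhds (half_lt_self hqα))
  have hclose : ∀ᶠ t in 𝓝 α, |t - α| < q α / (6 * K ^ 2) := by
    filter_upwards [Metric.ball_mem_nhds α (show 0 < q α / (6 * K ^ 2) by positivity)] with t ht
    rwa [Metric.mem_ball, Real.dist_eq] at ht
  refine ⟨K, hK, ?_⟩
  filter_upwards [hlin, hhK, hqα2, hclose] with t hzt hht hqt htα
  refine ⟨hzt, fun hneg => ?_⟩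
  have h3K : 3 * K ≤ q t / -z t := by
    rw [le_div_iff₀ (neg_pos.2 hneg), ← abs_of_neg hneg]
    calc 3 * K * |z t| ≤ 3 * K * (K * |t - α|) := by gcongr
      _ ≤ 3 * K * (K * (q α / (6 * K ^ 2))) := by gcongr
      _ = q α / 2 := by field_simp; ring
      _ ≤ q t := hqt.le
  rw [div_neg] at h3K
  linarith [(abs_lt.1 hht).1]

lemma not_eventually_neg_nhdsGT_of_eq_zero : ¬ ∀ᶠ t in 𝓝[>] α, z t < 0 := by
  intro hneg
  obtain ⟨K, hK, hKev⟩ := exists_abs_le_and_le_deriv_of_eq_zero hh hq hqα hd hz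
  obtain ⟨u, hu, hsub⟩ := mem_nhdsGT_iff_exists_Ioo_subset.1
    (hneg.and (nhdsWithin_le_nhds (hKev.and hd)))
  set t₁ := (α + u) / 2
  have ht₁ : t₁ ∈ Ioo α u := ⟨by simp only [t₁]; linarith [mem_Ioi.1 hu],
    by simp only [t₁]; linarith [mem_Ioi.1 hu]⟩
  have hderiv : ∀ t ∈ Icc α t₁, HasDerivAt z (h t - c - q t / z t) t := by
    rintro t ⟨hαt, htt₁⟩
    rcases hαt.eq_or_lt with rfl | hαt
    · exact hd.self_of_nhds
    · exact (hsub ⟨hαt, htt₁.trans_lt ht₁.2⟩).2.2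
  -- `z` rises at rate `≥ 2K` from `z α = 0`, yet `z t₁ < 0`
  have hrise := mul_sub_le_sub_of_hasDerivAt ht₁.1.le (HasDerivAt.continuousOn hderiv)
    (fun t ht => hderiv t (Ioo_subset_Icc_self ht))
    (fun t ht => (hsub ⟨ht.1, ht.2.trans ht₁.2⟩).2.1.2 (hsub ⟨ht.1, ht.2.trans ht₁.2⟩).1)
  rw [hz] at hrise
  nlinarith [ht₁.1, (hsub ht₁).1]

lemma not_eventually_neg_nhdsLT_of_eq_zero : ¬ ∀ᶠ t in 𝓝[<] α, z t < 0 := by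
  intro hneg
  obtain ⟨K, hK, hKev⟩ := exists_abs_le_and_le_deriv_of_eq_zero hh hq hqα hd hz
  obtain ⟨l, hl, hsub⟩ := mem_nhdsLT_iff_exists_Ioo_subset.1
    (hneg.and (nhdsWithin_le_nhds (hKev.and hd)))
  set t₁ := (l + α) / 2
  have ht₁ : t₁ ∈ Ioo l α := ⟨by simp only [t₁]; linarith [mem_Iio.1 hl],
    by simp only [t₁]; linarith [mem_Iio.1 hl]⟩
  have hderiv : ∀ t ∈ Icc t₁ α, HasDerivAt z (h t - c - q t / z t) t := by
    rintro t ⟨ht₁t, htα⟩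
    rcases htα.eq_or_lt with rfl | htα
    · exact hd.self_of_nhds
    · exact (hsub ⟨ht₁.1.trans_le ht₁t, htα⟩).2.2
  -- rising at rate `≥ 2K` up to `z α = 0` contradicts `|z t₁| ≤ K (α - t₁)`
  have hrise := mul_sub_le_sub_of_hasDerivAt ht₁.2.le (HasDerivAt.continuousOn hderiv)
    (fun t ht => hderiv t (Ioo_subset_Icc_self ht))
    (fun t ht => (hsub ⟨ht₁.1.trans ht.1, ht.2⟩).2.1.2 (hsub ⟨ht₁.1.trans ht.1, ht.2⟩).1)
  have hlin := (hsub ht₁).2.1.1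
  rw [abs_of_neg (hsub ht₁).1, abs_of_neg (sub_neg.2 ht₁.2)] at hlin
  rw [hz] at hrise
  nlinarith [ht₁.2]

end Zeros

lemma isNegSolOn_of_neg {c a b t₀ : ℝ} {z : ℝ → ℝ} (hh : ContinuousOn h (Ioo a b))
    (hq : ContinuousOn q (Ioo a b)) (hq₀ : ∀ t ∈ Ioo a b, 0 < q t) (hz : ContinuousOn z (Icc a b))
    (hd : SolvesOn h q c z (Ioo a b)) (ht₀ : t₀ ∈ Ioo a b) (hneg : z t₀ < 0) :
    IsNegSolOn h q c z a b := by
  refine ⟨hz, hd, fun σ hσ => not_le.1 fun hσ0 => ?_⟩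
  have hzero : ∀ α ∈ Ioo a b, z α = 0 →
      (¬ ∀ᶠ t in 𝓝[<] α, z t < 0) ∧ ¬ ∀ᶠ t in 𝓝[>] α, z t < 0 := fun α hα h0 => by
    have hN := isOpen_Ioo.mem_nhds hα
    exact ⟨not_eventually_neg_nhdsLT_of_eq_zero (hh.continuousAt hN) (hq.continuousAt hN)
      (hq₀ α hα) (eventually_of_mem hN hd) h0, not_eventually_neg_nhdsGT_of_eq_zero
      (hh.continuousAt hN) (hq.continuousAt hN) (hq₀ α hα) (eventually_of_mem hN hd) h0⟩
  rcases lt_trichotomy t₀ σ with hlt | rfl | hgt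
  · obtain ⟨α, hα, hα0, hbelow⟩ := exists_first_zero hlt.le
      (hz.mono (Icc_subset_Icc ht₀.1.le hσ.2.le)) hneg hσ0
    exact (hzero α ⟨ht₀.1.trans hα.1, hα.2.trans_lt hσ.2⟩ hα0).1
      (eventually_of_mem (Ico_mem_nhdsLT hα.1) hbelow)
  · exact hσ0.not_gt hneg
  · obtain ⟨α, hα, hα0, habove⟩ := exists_last_zero hgt.le
      (hz.mono (Icc_subset_Icc hσ.1.le ht₀.2.le)) hσ0 hneg
    exact (hzero α ⟨hσ.1.trans_le hα.1, hα.2.trans ht₀.2⟩ hα0).2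
      (eventually_of_mem (Ioc_mem_nhdsGT hα.2) habove)

lemma exists_hasDerivAt_sub_div_min {c a b σ ρ : ℝ} (x₀ : ℝ) {u : ℝ → ℝ}
    (hh : ContinuousOn h (Icc a b)) (hq : ContinuousOn q (Icc a b)) (hu : ContinuousOn u (Icc a b))
    (hρ : 0 < ρ) (huρ : ∀ t ∈ Icc a b, u t ≤ -ρ) (hσ : σ ∈ Icc a b) :
    ∃ z, ContinuousOn z (Icc a b) ∧ z σ = x₀ ∧
      ∀ t ∈ Ioo a b, HasDerivAt z (h t - c - q t / min (z t) (u t)) t := by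
  have hab : a ≤ b := hσ.1.trans hσ.2
  obtain ⟨Q, hQ⟩ := isCompact_Icc.exists_bound_of_continuousOn hq
  obtain ⟨M, hM⟩ :=
    isCompact_Icc.exists_bound_of_continuousOn (hh.sub (continuousOn_const (c := c)))
  have hQ0 : 0 ≤ Q := (norm_nonneg _).trans (hQ a ⟨le_rfl, hab⟩)
  have hM0 : 0 ≤ M := (norm_nonneg _).trans (hM a ⟨le_rfl, hab⟩)
  set v : ℝ → ℝ → ℝ := fun t x => h t - c - q t / min x (u t)
  have hbound : ∀ t ∈ Icc a b, ∀ x, ‖v t x‖ ≤ M + Q / ρ := fun t ht x => by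
    have hm : ρ ≤ |min x (u t)| := by
      rw [abs_of_neg (by linarith [min_le_right x (u t), huρ t ht])]
      linarith [min_le_right x (u t), huρ t ht]
    calc ‖v t x‖ ≤ ‖h t - c‖ + |q t| / |min x (u t)| := by
          rw [← abs_div]; exact norm_sub_le _ _
      _ ≤ M + Q / ρ := by
          gcongr
          · exact hM t ht
          · exact hQ t ht
  have hpl : IsPicardLindelof v ⟨σ, hσ⟩ x₀ ((M + Q / ρ) * (b - a)).toNNReal 0
      (M + Q / ρ).toNNReal (Q / ρ ^ 2).toNNReal :=
    { lipschitzOnWith := fun t ht =>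
        (lipschitzWith_sub_div_min_s17 hρ (huρ t ht) (hQ t ht)).lipschitzOnWith
      continuousOn := fun x _ => (hh.sub continuousOn_const).sub (hq.div
        (continuousOn_const.inf hu) fun t ht => ((min_le_right _ _).trans_lt
          ((huρ t ht).trans_lt (neg_lt_zero.2 hρ))).ne)
      norm_le := fun t ht x _ => (hbound t ht x).trans (Real.le_coe_toNNReal _)
      mul_max_le := by
        have : 0 ≤ b - a := by linarith
        rw [Real.coe_toNNReal _ (by positivity), Real.coe_toNNReal _ (by positivity),
          NNReal.coe_zero, sub_zero]
        gcongr
        exact max_le (by linarith [hσ.1]) (by linarith [hσ.2]) }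
  obtain ⟨z, hzσ, hz⟩ := hpl.exists_eq_forall_mem_Icc_hasDerivWithinAt₀
  exact ⟨z, fun t ht => (hz t ht).continuousWithinAt, hzσ, fun t ht =>
    (hz t (Ioo_subset_Icc_self ht)).hasDerivAt (Icc_mem_nhds ht.1 ht.2)⟩

lemma exists_isNegSolOn_eq {c a b σ x₀ : ℝ} {u : ℝ → ℝ} (hh : ContinuousOn h (Icc a b))
    (hq : ContinuousOn q (Icc a b)) (hu : IsNegSolOn h q c u a b) (hua : u a < 0) (hub : u b < 0)
    (hσ : σ ∈ Ioo a b) (hx₀ : x₀ < u σ) : ∃ z, IsNegSolOn h q c z a b ∧ z σ = x₀ := by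
  obtain ⟨ρ, hρ, huρ⟩ := isCompact_Icc.exists_pos_forall_le_neg hu.1 fun t ht => by
    rcases ht.1.eq_or_lt with rfl | h1
    · exact hua
    rcases ht.2.eq_or_lt with rfl | h2
    · exact hub
    exact hu.2.2 t ⟨h1, h2⟩
  -- truncating at `u` makes the field globally Lipschitz; below `u` nothing changes
  obtain ⟨z, hzc, hzσ, hzd⟩ := exists_hasDerivAt_sub_div_min (c := c) x₀ hh hq hu.1 hρ huρ
    (Ioo_subset_Icc_self hσ)
  have hud : ∀ t ∈ Ioo a b, HasDerivAt u (h t - c - q t / min (u t) (u t)) t := fun t ht => by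
    simpa only [min_self] using hu.2.1 t ht
  -- `z` and `u` solve the same Lipschitz equation and differ at `σ`, so they never meet
  have hne : ∀ t ∈ Ioo a b, z t - u t ≠ 0 := fun τ hτ h0 => by
    obtain ⟨Q, hQ⟩ := isCompact_Icc.exists_bound_of_continuousOn hq
    have := ODE_solution_unique_of_mem_Ioo (s := fun _ => univ)
      (v := fun t x => h t - c - q t / min x (u t)) (fun t ht =>
        (lipschitzWith_sub_div_min_s17 hρ (huρ t (Ioo_subset_Icc_self ht))
          (hQ t (Ioo_subset_Icc_self ht))).lipschitzOnWith) hτ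
      (fun t ht => ⟨hzd t ht, mem_univ _⟩) (fun t ht => ⟨hud t ht, mem_univ _⟩)
      (sub_eq_zero.1 h0) hσ
    linarith
  have hzu : ∀ t ∈ Ioo a b, z t - u t < 0 := isPreconnected_Ioo.neg_of_forall_ne_zero
    ((hzc.sub hu.1).mono Ioo_subset_Icc_self) hne hσ (by linarith)
  refine ⟨z, ⟨hzc, fun t ht => ?_, fun t ht => by linarith [hzu t ht, hu.2.2 t ht]⟩, hzσ⟩
  simpa only [min_eq_left (sub_neg.1 (hzu t ht)).le] using hzd t ht

lemma exists_solvesOn_of_forall_isNegSolOn {c σ x₀ : ℝ} (hq : ContinuousOn q (Ioo 0 1))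
    (hσ : σ ∈ Ioo 0 1) (H : ∀ a ∈ Ioo 0 σ, ∃ z, IsNegSolOn h q c z a 1 ∧ z σ = x₀) :
    ∃ Z : ℝ → ℝ, Z 0 = 0 ∧ Z σ = x₀ ∧ ContinuousOn Z (Ioc 0 1) ∧
      SolvesOn h q c Z (Ioo 0 1) ∧ ∀ t ∈ Ioo 0 1, Z t < 0 := by
  choose! z hz hzσ using H
  have hagree : ∀ a ∈ Ioo 0 σ, ∀ a' ∈ Ioo 0 σ, EqOn (z a) (z a') (Ioc (max a a') 1) := by
    intro a ha a' ha'
    have h₁ := (hz a ha).mono (le_max_left a a') le_rfl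
    have h₂ := (hz a' ha').mono (le_max_right a a') le_rfl
    refine EqOn.of_subset_closure (s := Ioo (max a a') 1) ?_ (h₁.1.mono Ioc_subset_Icc_self)
      (h₂.1.mono Ioc_subset_Icc_self) Ioo_subset_Ioc_self ?_
    · exact SolvesOn.eqOn isOpen_Ioo isPreconnected_Ioo
        (hq.mono (Ioo_subset_Ioo (ha.1.le.trans (le_max_left a a')) le_rfl)) h₁.2.1 h₂.2.1 h₁.2.2
        ⟨max_lt ha.2 ha'.2, hσ.2⟩ ((hzσ a ha).trans (hzσ a' ha').symm)
    · rw [closure_Ioo (max_lt (ha.2.trans hσ.2) (ha'.2.trans hσ.2)).ne]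
      exact Ioc_subset_Icc_self
  set ι : ℝ → ℝ := fun t => min t σ / 2
  have hι : ∀ t, 0 < t → ι t ∈ Ioo 0 σ ∧ ι t < t := fun t ht => by
    have := lt_min ht hσ.1
    simp only [ι]
    exact ⟨⟨by positivity, by linarith [min_le_right t σ]⟩, by linarith [min_le_left t σ]⟩
  set Z : ℝ → ℝ := fun t => if 0 < t then z (ι t) t else 0
  have hZ : ∀ a ∈ Ioo 0 σ, EqOn Z (z a) (Ioc a 1) := fun a ha t ht => by
    have ht0 : 0 < t := ha.1.trans ht.1
    simp only [Z, if_pos ht0]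
    exact hagree _ (hι t ht0).1 a ha ⟨max_lt (hι t ht0).2 ht.1, ht.2⟩
  have hZnhds : ∀ t ∈ Ioo 0 1, Z =ᶠ[𝓝 t] z (ι t) := fun t ht =>
    eventually_of_mem (Ioo_mem_nhds (hι t ht.1).2 ht.2) fun s hs =>
      hZ _ (hι t ht.1).1 (Ioo_subset_Ioc_self hs)
  refine ⟨Z, by simp [Z], ?_, fun t ht => ?_, fun t ht => ?_, fun t ht => ?_⟩
  · rw [hZ (σ / 2) ⟨by linarith [hσ.1], by linarith [hσ.1]⟩ ⟨by linarith [hσ.1], hσ.2.le⟩]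
    exact hzσ _ ⟨by linarith [hσ.1], by linarith [hσ.1]⟩
  · have ha := hι t ht.1
    have hmem : Ioc (ι t) 1 ∈ 𝓝[Ioc 0 1] t := by
      filter_upwards [self_mem_nhdsWithin, nhdsWithin_le_nhds (Ioi_mem_nhds ha.2)] with s hs hs'
      exact ⟨hs', hs.2⟩
    exact (((hz _ ha.1).1.mono Ioc_subset_Icc_self).congr (hZ _ ha.1) t
      ⟨ha.2, ht.2⟩).mono_of_mem_nhdsWithin hmem
  · have ha := hι t ht.1
    rw [(hZnhds t ht).self_of_nhds]
    exact ((hz _ ha.1).2.1 t ⟨ha.2, ht.2⟩).congr_of_eventuallyEq (hZnhds t ht)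
  · rw [(hZnhds t ht).self_of_nhds]
    exact (hz _ (hι t ht.1).1).2.2 t ⟨(hι t ht.1).2, ht.2⟩

lemma le_of_forall_pc_le {c cstar : ℝ} {zstar zβ : ℝ → ℝ} (hh : ContinuousOn h (Icc 0 1))
    (hq : ContinuousOn q (Icc 0 1)) (hq₀ : ∀ t ∈ Ioo (0:ℝ) 1, 0 ≤ q t) (hc : cstar < c)
    (hzs : PC h q cstar zstar) (hzβ : PC h q c zβ) (hzβ1 : zβ 1 < 0)
    (hmin : ∀ z, PC h q c z → z 1 < 0 → zβ 1 ≤ z 1) : ∀ t ∈ Ioo (0:ℝ) 1, zβ t ≤ zstar t := by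
  intro σ hσ
  by_contra! hlt
  have hqo := hq.mono Ioo_subset_Icc_self
  -- the solution through `(σ, zstar σ)` would be a solution of (P_c) ending below `zβ 1`
  obtain ⟨Z, hZ0, hZσ, hZc, hZd, hZn⟩ := exists_solvesOn_of_forall_isNegSolOn hqo hσ
    fun a ha => exists_isNegSolOn_eq (hh.mono (Icc_subset_Icc ha.1.le le_rfl))
      (hq.mono (Icc_subset_Icc ha.1.le le_rfl)) (IsNegSolOn.mono hzβ.1 ha.1.le le_rfl)
      (hzβ.1.2.2 a ⟨ha.1, ha.2.trans hσ.2⟩) hzβ1 ⟨ha.2, hσ.2⟩ hlt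
  have habove : ∀ t ∈ Ioo 0 σ, zstar t < Z t := fun t ht => by
    have hZt : IsNegSolOn h q c Z (t / 2) 1 :=
      ⟨hZc.mono (Icc_subset_Ioc_iff (by linarith [ht.2, hσ.2]) |>.2 ⟨by linarith [ht.1], le_rfl⟩),
        fun s hs => hZd s ⟨by linarith [hs.1, ht.1], hs.2⟩,
        fun s hs => hZn s ⟨by linarith [hs.1, ht.1], hs.2⟩⟩
    exact hZt.lt_of_ge_of_speed_lt hc (fun s hs => hq₀ s ⟨by linarith [hs.1, ht.1], hs.2⟩)
      (IsNegSolOn.mono hzs.1 (by linarith [ht.1]) le_rfl) ⟨by linarith [ht.1, ht.2], hσ.2.le⟩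
      hZσ.ge t ⟨by linarith [ht.1], ht.2⟩
  have hZpc : PC h q c Z := ⟨⟨continuousOn_Icc_of_squeeze hσ.1 hZc hZ0
    (hzs.1.1 0 ⟨le_rfl, zero_le_one⟩) hzs.2 fun t ht => ⟨(habove t ht).le,
      (hZn t ⟨ht.1, ht.2.trans hσ.2⟩).le⟩, hZd, hZn⟩, hZ0⟩
  have hZ1 := IsNegSolOn.lt_of_lt hqo hq₀ hZpc.1 hzβ.1 hσ (hZσ ▸ hlt) 1 ⟨one_pos, le_rfl⟩
  linarith [hmin Z hZpc (hZ1.trans hzβ1)]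

lemma lt_of_pc00_of_speed_lt {c₁ c₂ : ℝ} {z₁ z₂ : ℝ → ℝ} (hc : c₂ < c₁)
    (hq : ∀ t ∈ Ioo (0:ℝ) 1, 0 ≤ q t) (h₁ : PC00 h q c₁ z₁) (h₂ : PC00 h q c₂ z₂) :
    ∀ t ∈ Ioo (0:ℝ) 1, z₂ t < z₁ t := by
  intro t ht
  by_contra! hle
  exact (IsNegSolOn.lt_of_le_of_speed_lt hc hq h₁.1.1 h₂.1.1 ht hle 1 ⟨ht.2, le_rfl⟩).ne
    (h₁.2.trans h₂.2.symm)

lemma exists_pc_eq {c βc y φ₀ : ℝ} {zβ zc : ℝ → ℝ} (hq : ContinuousOn q (Ioo 0 1))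
    (hq₀ : ∀ t ∈ Ioo (0:ℝ) 1, 0 ≤ q t) (hφ₀ : φ₀ ∈ Ioo (0:ℝ) 1) (hβc : βc < 0)
    (hfam : ∀ b ∈ Ico βc 0, ∃ z, PC h q c z ∧ z 1 = b) (hzβ : PC h q c zβ) (hzβ1 : zβ 1 = βc)
    (hzβy : zβ φ₀ ≤ y) (hzc : PC00 h q c zc) (hzcy : y < zc φ₀) :
    ∃ z, PC h q c z ∧ z φ₀ = y ∧ βc ≤ z 1 := by
  choose! Z hZ hZ1 using hfam
  have hgap : ∀ b ∈ Ico βc 0, ∀ b' ∈ Ico βc 0, b ≤ b' →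
      Z b φ₀ ≤ Z b' φ₀ ∧ Z b' φ₀ - Z b φ₀ ≤ b' - b := fun b hb b' hb' hbb' => by
    have := IsNegSolOn.le_of_le hq hq₀ (hZ b hb).1 (hZ b' hb').1
      (by rwa [hZ1 b hb, hZ1 b' hb']) φ₀ hφ₀
    rwa [hZ1 b hb, hZ1 b' hb'] at this
  have hβ : βc ∈ Ico βc 0 := ⟨le_rfl, hβc⟩
  set b₁ := max βc (-((zc φ₀ - y) / 2))
  have hb₁ : b₁ ∈ Ico βc 0 := ⟨le_max_left _ _, max_lt hβc (by linarith)⟩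
  have hlow : Z βc φ₀ ≤ y := by
    have := IsNegSolOn.le_of_le hq hq₀ (hZ βc hβ).1 hzβ.1 (by rw [hZ1 βc hβ, hzβ1]) φ₀ hφ₀
    linarith [this.1]
  have hhigh : y ≤ Z b₁ φ₀ := by
    have := IsNegSolOn.le_of_le hq hq₀ (hZ b₁ hb₁).1 hzc.1.1
      (by rw [hZ1 b₁ hb₁, hzc.2]; exact hb₁.2.le) φ₀ hφ₀
    rw [hZ1 b₁ hb₁, hzc.2] at this
    linarith [this.2, le_max_right βc (-((zc φ₀ - y) / 2))]
  have hcont : ContinuousOn (fun b => Z b φ₀) (Icc βc b₁) := by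
    have hI : Icc βc b₁ ⊆ Ico βc 0 := Icc_subset_Ico_right hb₁.2
    refine (LipschitzOnWith.of_dist_le_mul (K := 1) fun b hb b' hb' => ?_).continuousOn
    rw [Real.dist_eq, Real.dist_eq, NNReal.coe_one, one_mul]
    rcases le_total b b' with hbb' | hbb'
    · have := hgap b (hI hb) b' (hI hb') hbb'
      rw [abs_sub_comm, abs_of_nonneg (by linarith), abs_sub_comm, abs_of_nonneg (by linarith)]
      exact this.2
    · have := hgap b' (hI hb') b (hI hb) hbb'
      rw [abs_of_nonneg (by linarith), abs_of_nonneg (by linarith)]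
      exact this.2
  obtain ⟨bs, hbs, hbsy⟩ := intermediate_value_Icc hb₁.1 hcont ⟨hlow, hhigh⟩
  have hbs' : bs ∈ Ico βc 0 := ⟨hbs.1, hbs.2.trans_lt hb₁.2⟩
  exact ⟨Z bs, hZ bs hbs', hbsy, (hZ1 bs hbs').symm ▸ hbs.1⟩

end SingularODE

open SingularODE

theorem stmt_17_general (h q : ℝ → ℝ) (cstar c βc : ℝ) (zstar zβ : ℝ → ℝ)
    (hq_cont : ContinuousOn q (Icc 0 1))
    (hq_pos : ∀ φ ∈ Ioo (0:ℝ) 1, 0 < q φ)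
    (hh_cont : ContinuousOn h (Icc 0 1))
    (hcstar : ∀ c' : ℝ, (∃ z : ℝ → ℝ, PC00 h q c' z) ↔ cstar ≤ c')
    (hzstar : PC00 h q cstar zstar)
    (hc : cstar < c)
    (hβneg : βc < 0)
    (hβ : ∀ b : ℝ, b < 0 → ((∃ z : ℝ → ℝ, PC h q c z ∧ z 1 = b) ↔ βc ≤ b))
    (hzβ : PC h q c zβ ∧ zβ 1 = βc) :
    (∀ φ₀ ∈ Ioo (0:ℝ) 1,
      (∃ zhat : ℝ → ℝ, HatSol h q c φ₀ zstar zhat ∧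
        zhat 0 = 0 ∧
        (∀ φ ∈ Ioc φ₀ 1, zhat φ < zstar φ) ∧
        (∀ φ ∈ Ioc (0:ℝ) 1, zβ φ ≤ zhat φ)) ∧
      (∀ z₁ z₂ : ℝ → ℝ, HatSol h q c φ₀ zstar z₁ → HatSol h q c φ₀ zstar z₂ →
        EqOn z₁ z₂ (Icc 0 1))) ∧
    (∀ φ₁ φ₀ : ℝ, φ₁ ∈ Ioo (0:ℝ) 1 → φ₀ ∈ Ioo (0:ℝ) 1 → φ₁ < φ₀ →
      ∀ z₁ z₀ : ℝ → ℝ, HatSol h q c φ₁ zstar z₁ → HatSol h q c φ₀ zstar z₀ →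
        ∀ φ ∈ Ioc (0:ℝ) 1, z₁ φ < z₀ φ) := by
  have hq₀ : ∀ t ∈ Ioo (0:ℝ) 1, 0 ≤ q t := fun t ht => (hq_pos t ht).le
  have hqo := hq_cont.mono Ioo_subset_Icc_self
  obtain ⟨zc, hzc⟩ := (hcstar c).2 hc.le
  have hzcs := lt_of_pc00_of_speed_lt hc hq₀ hzc hzstar
  obtain ⟨hzs, -⟩ := hzstar
  obtain ⟨hzβ, hzβ1⟩ := hzβ
  have hβz : ∀ t ∈ Ioo (0:ℝ) 1, zβ t ≤ zstar t :=
    le_of_forall_pc_le hh_cont hq_cont hq₀ hc hzs hzβ (hzβ1 ▸ hβneg)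
      fun z hz hz1 => hzβ1 ▸ (hβ _ hz1).1 ⟨z, hz, rfl⟩
  have hneg : ∀ φ₀ ∈ Ioo (0:ℝ) 1, ∀ z, HatSol h q c φ₀ zstar z → IsNegSolOn h q c z 0 1 :=
    fun φ₀ hφ₀ z hz => isNegSolOn_of_neg (hh_cont.mono Ioo_subset_Icc_self) hqo hq_pos hz.1
      hz.2.1 hφ₀ (hz.2.2 ▸ hzs.1.2.2 φ₀ hφ₀)
  refine ⟨fun φ₀ hφ₀ => ⟨?_, fun z₁ z₂ h₁ h₂ => ?_⟩, fun φ₁ φ₀ hφ₁ hφ₀ hlt z₁ z₀ h₁ h₀ => ?_⟩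
  · obtain ⟨z, hz, hzφ₀, hz1⟩ := exists_pc_eq hqo hq₀ hφ₀ hβneg
      (fun b hb => (hβ b hb.2).2 hb.1) hzβ hzβ1 (hβz φ₀ hφ₀) hzc (hzcs φ₀ hφ₀)
    refine ⟨z, ⟨hz.1.1, hz.1.2.1, hzφ₀⟩, hz.2,
      IsNegSolOn.lt_of_le_of_speed_lt hc hq₀ hz.1 hzs.1 hφ₀ hzφ₀.le, fun φ hφ => ?_⟩
    rcases hφ.2.lt_or_eq with hφ1 | rfl
    · exact (IsNegSolOn.le_of_le hqo hq₀ hzβ.1 hz.1 (hzβ1 ▸ hz1) φ ⟨hφ.1, hφ1⟩).1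
    · exact hzβ1 ▸ hz1
  · exact (hneg φ₀ hφ₀ z₁ h₁).eqOn hqo (hneg φ₀ hφ₀ z₂ h₂) hφ₀ (h₁.2.2.trans h₂.2.2.symm)
  · have hz₀ := hneg φ₀ hφ₀ z₀ h₀
    have hgt : zstar φ₁ < z₀ φ₁ := hz₀.lt_of_ge_of_speed_lt hc hq₀ hzs.1 ⟨hφ₀.1, hφ₀.2.le⟩
      h₀.2.2.ge φ₁ ⟨hφ₁.1, hlt⟩
    exact (hneg φ₁ hφ₁ z₁ h₁).lt_of_lt hqo hq₀ hz₀ hφ₁ (h₁.2.2 ▸ hgt)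

/-- existence, uniqueness and properties of the solutions ẑ_{φ₀},
and their monotonicity in φ₀. -/
theorem stmt_17 (f h q : ℝ → ℝ) (cstar c βc : ℝ) (zstar zβ : ℝ → ℝ)
    (hq_cont : ContinuousOn q (Icc 0 1))
    (hq_pos : ∀ φ ∈ Ioo (0:ℝ) 1, 0 < q φ)
    (hq0 : q 0 = 0) (hq1 : q 1 = 0)
    (hq_lim : ∃ L : ℝ, ∀ᶠ φ in 𝓝[>] (0:ℝ), q φ / φ ≤ L)
    (hf0 : f 0 = 0)
    (hf' : ∀ x ∈ Icc (0:ℝ) 1, HasDerivWithinAt f (h x) (Icc 0 1) x)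
    (hh_cont : ContinuousOn h (Icc 0 1))
    (hcstar : ∀ c' : ℝ, (∃ z : ℝ → ℝ, PC00 h q c' z) ↔ cstar ≤ c')
    (hzstar : PC00 h q cstar zstar)
    (hc : cstar < c)
    (hβneg : βc < 0)
    (hβ : ∀ b : ℝ, b < 0 → ((∃ z : ℝ → ℝ, PC h q c z ∧ z 1 = b) ↔ βc ≤ b))
    (hzβ : PC h q c zβ ∧ zβ 1 = βc) :
    (∀ φ₀ ∈ Ioo (0:ℝ) 1,
      (∃ zhat : ℝ → ℝ, HatSol h q c φ₀ zstar zhat ∧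
        zhat 0 = 0 ∧
        (∀ φ ∈ Ioc φ₀ 1, zhat φ < zstar φ) ∧
        (∀ φ ∈ Ioc (0:ℝ) 1, zβ φ ≤ zhat φ)) ∧
      (∀ z₁ z₂ : ℝ → ℝ, HatSol h q c φ₀ zstar z₁ → HatSol h q c φ₀ zstar z₂ →
        EqOn z₁ z₂ (Icc 0 1))) ∧
    (∀ φ₁ φ₀ : ℝ, φ₁ ∈ Ioo (0:ℝ) 1 → φ₀ ∈ Ioo (0:ℝ) 1 → φ₁ < φ₀ →
      ∀ z₁ z₀ : ℝ → ℝ, HatSol h q c φ₁ zstar z₁ → HatSol h q c φ₀ zstar z₀ →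
        ∀ φ ∈ Ioc (0:ℝ) 1, z₁ φ < z₀ φ) :=
  stmt_17_general h q cstar c βc zstar zβ hq_cont hq_pos hh_cont hcstar hzstar hc hβneg hβ hzβ
end
end
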